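/- arXiv:1601.07588 — 10 statements merged into one kernel-verified Lean document; each statement's English description precedes it below -/
import Mathlib

section
/- Let n ≥ 2 be an integer and let r : I → ℝ be a twice differentiable positive function on an open interval I containing 0 with r(0) = 1, r'(0) = 0, and satisfying r(z)·r''(z) − (n−1)(1 + r'(z)²) = 0 for all z ∈ I. Then 1 + r'(z)² = r(z)^(2n−2) for all z ∈ I. -/
/-!
With `m = n - 1`, along a solution of `r r'' = m (1 + r'²)` the quantity `(1 + r'²) / r^(2m)`
has derivative `2 r' r^(-2m-1) (r r'' - m (1 + r'²)) = 0`, so it is a first integral of the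
catenoid equation. On the interval `I` it therefore keeps its value `1` at `z = 0`.
-/

theorem Convex.is_const_of_hasDerivAt_zero {s : Set ℝ} {f : ℝ → ℝ} (hs : Convex ℝ s)
    (hf : ∀ x ∈ s, HasDerivAt f 0 x) {x y : ℝ} (hx : x ∈ s) (hy : y ∈ s) : f x = f y := by
  have h := hs.norm_image_sub_le_of_norm_hasDerivWithin_le
    (fun z hz => (hf z hz).hasDerivWithinAt) (fun _ _ => norm_zero.le) hy hx
  rw [zero_mul, norm_le_zero_iff, sub_eq_zero] at h
  exact h

noncomputable def catenoidFirstIntegral (m : ℕ) (r : ℝ → ℝ) (z : ℝ) : ℝ :=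
  (1 + deriv r z ^ 2) / r z ^ (2 * m)

theorem hasDerivAt_catenoidFirstIntegral {m : ℕ} {r : ℝ → ℝ} {z : ℝ}
    (hr : DifferentiableAt ℝ r z) (hr' : DifferentiableAt ℝ (deriv r) z) (hz : r z ≠ 0)
    (hode : r z * deriv (deriv r) z = m * (1 + deriv r z ^ 2)) :
    HasDerivAt (catenoidFirstIntegral m r) 0 z := by
  have hnum : HasDerivAt (fun z => 1 + deriv r z ^ 2)
      (2 * deriv r z * deriv (deriv r) z) z := by
    simpa using (hr'.hasDerivAt.pow 2).const_add 1
  have hden : HasDerivAt (fun z => r z ^ (2 * m))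
      ((2 * m : ℕ) * r z ^ (2 * m - 1) * deriv r z) z := hr.hasDerivAt.pow (2 * m)
  refine (hnum.div hden (pow_ne_zero _ hz)).congr_deriv ?_
  have hpow : (m : ℝ) * r z ^ (2 * m - 1) * r z = m * r z ^ (2 * m) := by
    rcases m.eq_zero_or_pos with rfl | hm
    · simp
    · rw [mul_assoc, ← pow_succ, Nat.sub_add_cancel (by omega)]
  rw [div_eq_zero_iff]
  left
  refine (mul_eq_zero_iff_left hz).mp ?_
  push_cast
  linear_combination (2 * deriv r z * r z ^ (2 * m)) * hode
    - 2 * deriv r z * (1 + deriv r z ^ 2) * hpow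

theorem catenoid_profile_first_order_general (n : ℕ) (hn : 2 ≤ n)
    (I : Set ℝ) (hIconn : I.OrdConnected) (h0I : (0 : ℝ) ∈ I)
    (r : ℝ → ℝ)
    (hpos : ∀ z ∈ I, 0 < r z)
    (hdiff : ∀ z ∈ I, DifferentiableAt ℝ r z ∧ DifferentiableAt ℝ (deriv r) z)
    (hr0 : r 0 = 1) (hr'0 : deriv r 0 = 0)
    (hode : ∀ z ∈ I,
      r z * deriv (deriv r) z - ((n : ℝ) - 1) * (1 + (deriv r z) ^ 2) = 0) :
    ∀ z ∈ I, 1 + (deriv r z) ^ 2 = (r z) ^ (2 * n - 2) := by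
  have hcast : ((n - 1 : ℕ) : ℝ) = n - 1 := by rw [Nat.cast_sub (by omega), Nat.cast_one]
  have hconst : ∀ z ∈ I, HasDerivAt (catenoidFirstIntegral (n - 1) r) 0 z := fun z hz =>
    hasDerivAt_catenoidFirstIntegral (hdiff z hz).1 (hdiff z hz).2 (hpos z hz).ne'
      (by rw [hcast]; linarith [hode z hz])
  intro z hz
  have hz0 := hIconn.convex.is_const_of_hasDerivAt_zero hconst hz h0I
  rw [catenoidFirstIntegral, catenoidFirstIntegral, hr0, hr'0, Nat.mul_sub_one,
    div_eq_iff (pow_ne_zero _ (hpos z hz).ne')] at hz0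
  simpa using hz0

/-- For a normalized n-catenoid profile function `r` (positive, twice
differentiable on an open interval `I` containing `0`, with `r 0 = 1`, `r' 0 = 0`,
satisfying `r·r'' − (n−1)(1 + r'²) = 0`), the first-order equation
`1 + r'² = r^(2n−2)` holds on `I`. -/
theorem catenoid_profile_first_order (n : ℕ) (hn : 2 ≤ n)
    (I : Set ℝ) (hIopen : IsOpen I) (hIconn : I.OrdConnected) (h0I : (0 : ℝ) ∈ I)
    (r : ℝ → ℝ)
    (hpos : ∀ z ∈ I, 0 < r z)
    (hdiff : ∀ z ∈ I, DifferentiableAt ℝ r z ∧ DifferentiableAt ℝ (deriv r) z)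
    (hr0 : r 0 = 1) (hr'0 : deriv r 0 = 0)
    (hode : ∀ z ∈ I,
      r z * deriv (deriv r) z - ((n : ℝ) - 1) * (1 + (deriv r z) ^ 2) = 0) :
    ∀ z ∈ I, 1 + (deriv r z) ^ 2 = (r z) ^ (2 * n - 2) :=
  catenoid_profile_first_order_general n hn I hIconn h0I r hpos hdiff hr0 hr'0 hode
end

section
/- Let n ≥ 2 be an integer and let r : (−T, T) → ℝ be a maximal n-catenoid profile function. Suppose z : J → ℝ is a differentiable function on an interval J ⊆ [0, ∞) satisfying z(c)·r'(z(c) − c) = r(z(c) − c) and z(c) ≠ 0 for all c ∈ J. Then for each c ∈ J one has z'(c) = 1 − r'(z(c) − c)² / ((n−1)(1 + r'(z(c) − c)²)), which is strictly positive, and (d/dc)(z(c) − c) = − r'(z(c) − c)² / ((n−1)(1 + r'(z(c) − c)²)), which is strictly negative. -/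
/-- A maximal `n`-catenoid profile function: a twice differentiable positive function
`r` on the interval `(-T, T)` (where `0 < T ≤ ∞`, encoded via `T : EReal`) with
`r 0 = 1`, `r' 0 = 0`, satisfying the catenoid ODE `r·r'' − (n−1)(1 + r'²) = 0`,
and with `r z → ∞` as `z → ±T`. -/
def IsMaxCatenoidProfile (n : ℕ) (T : EReal) (r : ℝ → ℝ) : Prop :=
  0 < T ∧
  (∀ z : ℝ, (z : EReal) ∈ Set.Ioo (-T) T → 0 < r z) ∧
  (∀ z : ℝ, (z : EReal) ∈ Set.Ioo (-T) T →
    DifferentiableAt ℝ r z ∧ DifferentiableAt ℝ (deriv r) z) ∧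
  r 0 = 1 ∧ deriv r 0 = 0 ∧
  (∀ z : ℝ, (z : EReal) ∈ Set.Ioo (-T) T →
    r z * deriv (deriv r) z - ((n : ℝ) - 1) * (1 + (deriv r z) ^ 2) = 0) ∧
  Filter.Tendsto r
    (Filter.comap (fun z : ℝ => (z : EReal)) (nhdsWithin T (Set.Iio T))) Filter.atTop ∧
  Filter.Tendsto r
    (Filter.comap (fun z : ℝ => (z : EReal)) (nhdsWithin (-T) (Set.Ioi (-T)))) Filter.atTop

/-!
Put `w = z c - c`, `p = r' w`, `q = r'' w`. Differentiating `z · r'(w) = r(w)` gives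
`z' · z q = z q - p`, and the ODE together with `r w = z p` gives `z p q = (n - 1)(1 + p²)`;
multiplying the first identity by `p` yields the formula for `z'`. The ODE forces `r'' > 0`,
so `r'` vanishes only at `0`, while `w ≠ 0` because `z · r'(0) = 0 ≠ 1 = r 0`; hence `p ≠ 0`.
-/

open Set Filter

/-- At an isolated point of `s` every value is a derivative within `s`. -/
theorem HasDerivWithinAt.congr_deriv_of_accPt {f : ℝ → ℝ} {s : Set ℝ} {x f' g' : ℝ}
    (hf : HasDerivWithinAt f f' s x) (h : AccPt x (𝓟 s) → f' = g') :
    HasDerivWithinAt f g' s x := by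
  by_cases hx : AccPt x (𝓟 s)
  · exact h hx ▸ hf
  · exact HasFDerivWithinAt.of_not_accPt hx

/-- Implicit differentiation of the tangency relation `z x · r'(z x - x) = r(z x - x)`. -/
theorem mul_deriv_eq_of_tangency {r z : ℝ → ℝ} {J : Set ℝ} {c d : ℝ}
    (hz : HasDerivWithinAt z d J c) (hc : c ∈ J) (hacc : AccPt c (𝓟 J))
    (hr : DifferentiableAt ℝ r (z c - c)) (hr' : DifferentiableAt ℝ (deriv r) (z c - c))
    (heq : ∀ x ∈ J, z x * deriv r (z x - x) = r (z x - x)) :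
    d * (z c * deriv (deriv r) (z c - c)) =
      z c * deriv (deriv r) (z c - c) - deriv r (z c - c) := by
  have hw : HasDerivWithinAt (fun x => z x - x) (d - 1) J c := hz.sub (hasDerivWithinAt_id c J)
  have hG := (hz.mul (hr'.hasDerivAt.comp_hasDerivWithinAt_of_eq c hw rfl)).sub
    (hr.hasDerivAt.comp_hasDerivWithinAt_of_eq c hw rfl)
  have hG0 : HasDerivWithinAt (fun _ => (0 : ℝ)) _ J c :=
    hG.congr_of_mem (fun x hx => (sub_eq_zero.2 (heq x hx)).symm) hc
  have := hacc.uniqueDiffWithinAt.eq_deriv J hG0 (hasDerivWithinAt_const c J 0)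
  simp only [Function.comp_apply] at this
  linear_combination this

theorem one_le_natCast_sub_one {n : ℕ} (hn : 2 ≤ n) : (1 : ℝ) ≤ n - 1 := by
  linarith [(Nat.ofNat_le_cast.2 hn : (2 : ℝ) ≤ n)]

namespace IsMaxCatenoidProfile

variable {n : ℕ} {T : EReal} {r : ℝ → ℝ}

theorem ordConnected_domain : ((↑) ⁻¹' Ioo (-T) T : Set ℝ).OrdConnected :=
  ordConnected_Ioo.preimage_mono fun _ _ => EReal.coe_le_coe_iff.2

theorem zero_mem_domain (hr : IsMaxCatenoidProfile n T r) : ((0 : ℝ) : EReal) ∈ Ioo (-T) T := by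
  simpa using hr.1

theorem deriv_deriv_pos (hr : IsMaxCatenoidProfile n T r) (hn : 2 ≤ n) {x : ℝ}
    (hx : (x : EReal) ∈ Ioo (-T) T) : 0 < deriv (deriv r) x := by
  have hn1 : (0 : ℝ) < n - 1 := by linarith [one_le_natCast_sub_one hn]
  obtain ⟨-, hpos, -, -, -, hode, -, -⟩ := hr
  have : 0 < r x * deriv (deriv r) x := by
    rw [sub_eq_zero.1 (hode x hx)]
    exact mul_pos hn1 (by positivity)
  exact pos_of_mul_pos_right this (hpos x hx).le

theorem strictMonoOn_deriv (hr : IsMaxCatenoidProfile n T r) (hn : 2 ≤ n) :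
    StrictMonoOn (deriv r) ((↑) ⁻¹' Ioo (-T) T) :=
  strictMonoOn_of_deriv_pos ordConnected_domain.convex
    (fun x hx => (hr.2.2.1 x hx).2.continuousAt.continuousWithinAt)
    fun _ hx => hr.deriv_deriv_pos hn
      (interior_subset (s := ((↑) ⁻¹' Ioo (-T) T : Set ℝ)) hx)

theorem deriv_ne_zero (hr : IsMaxCatenoidProfile n T r) (hn : 2 ≤ n) {x : ℝ}
    (hx : (x : EReal) ∈ Ioo (-T) T) (hx0 : x ≠ 0) : deriv r x ≠ 0 := by
  have hr'0 : deriv r 0 = 0 := hr.2.2.2.2.1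
  rw [← hr'0]
  rcases hx0.lt_or_gt with hneg | hpos
  · exact (hr.strictMonoOn_deriv hn hx hr.zero_mem_domain hneg).ne
  · exact (hr.strictMonoOn_deriv hn hr.zero_mem_domain hx hpos).ne'

theorem ne_zero_of_mul_deriv_eq (hr : IsMaxCatenoidProfile n T r) {x y : ℝ}
    (h : y * deriv r x = r x) : x ≠ 0 := by
  rintro rfl
  obtain ⟨-, -, -, hr0, hr'0, -, -, -⟩ := hr
  simp [hr0, hr'0] at h

theorem deriv_eq_of_tangency (hr : IsMaxCatenoidProfile n T r) (hn : 2 ≤ n) {z : ℝ → ℝ}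
    {J : Set ℝ} {c d : ℝ} (hz : HasDerivWithinAt z d J c) (hc : c ∈ J)
    (hacc : AccPt c (𝓟 J))
    (hw : ((z c - c : ℝ) : EReal) ∈ Ioo (-T) T)
    (heq : ∀ x ∈ J, z x * deriv r (z x - x) = r (z x - x)) :
    d = 1 - deriv r (z c - c) ^ 2 / ((n - 1) * (1 + deriv r (z c - c) ^ 2)) := by
  have hn1 : (0 : ℝ) < n - 1 := by linarith [one_le_natCast_sub_one hn]
  obtain ⟨-, -, hdiff, -, -, hode, -, -⟩ := hr
  have hrel := mul_deriv_eq_of_tangency hz hc hacc (hdiff _ hw).1 (hdiff _ hw).2 heq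
  have hode := hode _ hw
  rw [← heq c hc] at hode
  have : (n - 1) * (1 + deriv r (z c - c) ^ 2) ≠ 0 := (mul_pos hn1 (by positivity)).ne'
  field_simp
  linear_combination deriv r (z c - c) * hrel - (d - 1) * hode

end IsMaxCatenoidProfile

theorem radial_tangency_point_monotonicity_general (n : ℕ) (hn : 2 ≤ n)
    (T : EReal) (r : ℝ → ℝ) (hr : IsMaxCatenoidProfile n T r)
    (J : Set ℝ)
    (z : ℝ → ℝ) (hzdiff : DifferentiableOn ℝ z J)
    (hdom : ∀ c ∈ J, ((z c - c : ℝ) : EReal) ∈ Set.Ioo (-T) T)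
    (heq : ∀ c ∈ J, z c * deriv r (z c - c) = r (z c - c)) :
    ∀ c ∈ J,
      HasDerivWithinAt z
        (1 - (deriv r (z c - c)) ^ 2 /
          (((n : ℝ) - 1) * (1 + (deriv r (z c - c)) ^ 2))) J c ∧
      0 < 1 - (deriv r (z c - c)) ^ 2 /
          (((n : ℝ) - 1) * (1 + (deriv r (z c - c)) ^ 2)) ∧
      HasDerivWithinAt (fun c => z c - c)
        (-((deriv r (z c - c)) ^ 2 /
          (((n : ℝ) - 1) * (1 + (deriv r (z c - c)) ^ 2)))) J c ∧
      -((deriv r (z c - c)) ^ 2 /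
          (((n : ℝ) - 1) * (1 + (deriv r (z c - c)) ^ 2))) < 0 := by
  intro c hc
  have hn1 := one_le_natCast_sub_one hn
  set p := deriv r (z c - c)
  have hp : p ≠ 0 := hr.deriv_ne_zero hn (hdom c hc) (hr.ne_zero_of_mul_deriv_eq (heq c hc))
  have hden : 0 < ((n : ℝ) - 1) * (1 + p ^ 2) := mul_pos (by linarith) (by positivity)
  have hz : HasDerivWithinAt z (1 - p ^ 2 / (((n : ℝ) - 1) * (1 + p ^ 2))) J c :=
    (hzdiff c hc).hasDerivWithinAt.congr_deriv_of_accPt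
      fun hacc => hr.deriv_eq_of_tangency hn (hzdiff c hc).hasDerivWithinAt hc hacc (hdom c hc) heq
  refine ⟨hz, sub_pos.2 ((div_lt_one hden).2 (by nlinarith)),
    (hz.sub (hasDerivWithinAt_id c J)).congr_deriv (by ring),
    neg_neg_of_pos (div_pos (by positivity) hden)⟩

/-- If `z : J → ℝ` is differentiable on an interval `J ⊆ [0, ∞)` and
satisfies `z(c)·r'(z(c) − c) = r(z(c) − c)` with `z(c) ≠ 0`, then
`z'(c) = 1 − r'²/((n−1)(1 + r'²)) > 0` and `(z − c)'(c) = −r'²/((n−1)(1 + r'²)) < 0`,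
where `r'` is evaluated at `z(c) − c`. -/
theorem radial_tangency_point_monotonicity (n : ℕ) (hn : 2 ≤ n)
    (T : EReal) (r : ℝ → ℝ) (hr : IsMaxCatenoidProfile n T r)
    (J : Set ℝ) (hJ : J ⊆ Set.Ici (0 : ℝ)) (hJconn : J.OrdConnected)
    (z : ℝ → ℝ) (hzdiff : DifferentiableOn ℝ z J)
    (hdom : ∀ c ∈ J, ((z c - c : ℝ) : EReal) ∈ Set.Ioo (-T) T)
    (heq : ∀ c ∈ J, z c * deriv r (z c - c) = r (z c - c))
    (hne : ∀ c ∈ J, z c ≠ 0) :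
    ∀ c ∈ J,
      HasDerivWithinAt z
        (1 - (deriv r (z c - c)) ^ 2 /
          (((n : ℝ) - 1) * (1 + (deriv r (z c - c)) ^ 2))) J c ∧
      0 < 1 - (deriv r (z c - c)) ^ 2 /
          (((n : ℝ) - 1) * (1 + (deriv r (z c - c)) ^ 2)) ∧
      HasDerivWithinAt (fun c => z c - c)
        (-((deriv r (z c - c)) ^ 2 /
          (((n : ℝ) - 1) * (1 + (deriv r (z c - c)) ^ 2)))) J c ∧
      -((deriv r (z c - c)) ^ 2 /
          (((n : ℝ) - 1) * (1 + (deriv r (z c - c)) ^ 2))) < 0 :=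
  radial_tangency_point_monotonicity_general n hn T r hr J z hzdiff hdom heq
end

section
/- Let n ≥ 2 be an integer and let r : (−T, T) → ℝ be a maximal n-catenoid profile function. If z₀ > 0 satisfies z₀·r'(z₀) = r(z₀), then r(z₀) ≥ n^(1/(2n−2)). -/
open Set

def SolvesCatenoidODEOn (c : ℝ) (r : ℝ → ℝ) (s : Set ℝ) : Prop :=
  ∀ z ∈ s, 0 < r z ∧ DifferentiableAt ℝ r z ∧ DifferentiableAt ℝ (deriv r) z ∧
    r z * deriv (deriv r) z = c * (1 + deriv r z ^ 2)

lemma monotoneOn_Icc_of_hasDerivAt_nonneg {f f' : ℝ → ℝ} {a b : ℝ}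
    (hf : ∀ z ∈ Icc a b, HasDerivAt f (f' z) z) (hf' : ∀ z ∈ Ioo a b, 0 ≤ f' z) :
    MonotoneOn f (Icc a b) :=
  monotoneOn_of_hasDerivWithinAt_nonneg (convex_Icc a b)
    (fun z hz => (hf z hz).continuousAt.continuousWithinAt)
    (fun z hz => by
      rw [interior_Icc] at hz ⊢
      exact (hf z (Ioo_subset_Icc_self hz)).hasDerivWithinAt)
    (by rwa [interior_Icc])

lemma quadratic_le_of_le_deriv_deriv {f : ℝ → ℝ} {a b c : ℝ} (hab : a ≤ b)
    (hf : ∀ z ∈ Icc a b, DifferentiableAt ℝ f z ∧ DifferentiableAt ℝ (deriv f) z)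
    (hf'' : ∀ z ∈ Icc a b, c ≤ deriv (deriv f) z) :
    f a + deriv f a * (b - a) + c / 2 * (b - a) ^ 2 ≤ f b := by
  have ha : a ∈ Icc a b := left_mem_Icc.2 hab
  have hb : b ∈ Icc a b := right_mem_Icc.2 hab
  have hslope : MonotoneOn (fun z => deriv f z - c * (z - a)) (Icc a b) := by
    refine monotoneOn_Icc_of_hasDerivAt_nonneg (f' := fun z => deriv (deriv f) z - c)
      (fun z hz => ?_) (fun z hz => sub_nonneg.2 (hf'' z (Ioo_subset_Icc_self hz)))
    simpa using (hf z hz).2.hasDerivAt.fun_sub (((hasDerivAt_id z).sub_const a).const_mul c)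
  have hgap : MonotoneOn (fun z => f z - deriv f a * (z - a) - c / 2 * (z - a) ^ 2) (Icc a b) := by
    refine monotoneOn_Icc_of_hasDerivAt_nonneg
      (f' := fun z => deriv f z - c * (z - a) - deriv f a) (fun z hz => ?_) (fun z hz => ?_)
    · have := ((hf z hz).1.hasDerivAt.fun_sub
        (((hasDerivAt_id z).sub_const a).const_mul (deriv f a))).fun_sub
        ((((hasDerivAt_id z).sub_const a).fun_pow 2).const_mul (c / 2))
      refine this.congr_deriv ?_
      simp only [id, mul_one, Nat.cast_ofNat]
      ring
    · have := hslope ha (Ioo_subset_Icc_self hz) hz.1.le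
      simp only [sub_self, mul_zero, sub_zero] at this
      linarith
  have := hgap ha hb hab
  simp only [sub_self, mul_zero, sub_zero, zero_pow two_ne_zero] at this
  linarith

lemma le_sq_of_quadratic_le_mul {c z p R : ℝ} (hR : z * p = R) (hquad : 1 + c / 2 * z ^ 2 ≤ R) :
    c ≤ p ^ 2 := by
  rcases le_or_gt c 0 with hc | hc
  · exact hc.trans (sq_nonneg p)
  have hRpos : 0 < R := by nlinarith [sq_nonneg z]
  have hsq : c * R ^ 2 ≤ p ^ 2 * R ^ 2 :=
    calc c * R ^ 2 = c * z ^ 2 * p ^ 2 := by rw [← hR]; ring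
      _ ≤ 2 * (R - 1) * p ^ 2 := mul_le_mul_of_nonneg_right (by linarith) (sq_nonneg p)
      _ ≤ R ^ 2 * p ^ 2 :=
        mul_le_mul_of_nonneg_right (by nlinarith [sq_nonneg (R - 1)]) (sq_nonneg p)
      _ = p ^ 2 * R ^ 2 := mul_comm _ _
  exact le_of_mul_le_mul_right hsq (by positivity)

variable {c : ℝ} {r : ℝ → ℝ}

lemma hasDerivAt_catenoid_first_integral {z : ℝ} (hpos : 0 < r z) (hr : DifferentiableAt ℝ r z)
    (hr' : DifferentiableAt ℝ (deriv r) z)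
    (hode : r z * deriv (deriv r) z = c * (1 + deriv r z ^ 2)) :
    HasDerivAt (fun z => (1 + deriv r z ^ 2) / r z ^ (2 * c)) 0 z := by
  -- the quotient-rule numerator is `2 r' r^(2c-1) (r r'' - c (1 + r'²))`
  have h := ((hr'.hasDerivAt.fun_pow 2).const_add 1).fun_div
    (hr.hasDerivAt.rpow_const (p := 2 * c) (Or.inl hpos.ne')) (Real.rpow_pos_of_pos hpos _).ne'
  refine h.congr_deriv ?_
  rw [Real.rpow_sub_one hpos.ne', div_eq_zero_iff]
  left
  norm_num
  field_simp
  linear_combination 2 * deriv r z * r z ^ (2 * c) * hode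

namespace SolvesCatenoidODEOn

variable {a b : ℝ}

lemma one_add_deriv_sq_eq_rpow (h : SolvesCatenoidODEOn c r (Icc a b)) (ha : r a = 1)
    (ha' : deriv r a = 0) {z : ℝ} (hz : z ∈ Icc a b) : 1 + deriv r z ^ 2 = r z ^ (2 * c) := by
  have hderiv : ∀ z ∈ Icc a b, HasDerivAt (fun z => (1 + deriv r z ^ 2) / r z ^ (2 * c)) 0 z :=
    fun z hz => let ⟨hpos, hr, hr', hode⟩ := h z hz
      hasDerivAt_catenoid_first_integral hpos hr hr' hode
  have hconst := constant_of_has_deriv_right_zero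
    (fun z hz => (hderiv z hz).continuousAt.continuousWithinAt)
    (fun z hz => (hderiv z (Ico_subset_Icc_self hz)).hasDerivWithinAt) z hz
  rw [ha, ha', Real.one_rpow] at hconst
  rwa [div_eq_iff (Real.rpow_pos_of_pos (h z hz).1 _).ne', zero_pow two_ne_zero, add_zero,
    div_one, one_mul] at hconst

lemma one_le (h : SolvesCatenoidODEOn c r (Icc a b)) (hc : 0 < c) (ha : r a = 1)
    (ha' : deriv r a = 0) {z : ℝ} (hz : z ∈ Icc a b) : 1 ≤ r z := by
  by_contra! hlt
  have := h.one_add_deriv_sq_eq_rpow ha ha' hz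
  have := Real.rpow_lt_one (h z hz).1.le hlt (by positivity : 0 < 2 * c)
  nlinarith [sq_nonneg (deriv r z)]

lemma le_deriv_deriv (h : SolvesCatenoidODEOn c r (Icc a b)) (hc : 1 / 2 ≤ c) (ha : r a = 1)
    (ha' : deriv r a = 0) {z : ℝ} (hz : z ∈ Icc a b) : c ≤ deriv (deriv r) z := by
  obtain ⟨hpos, -, -, hode⟩ := h z hz
  have hr1 := h.one_le (by linarith) ha ha' hz
  have hself : r z ≤ r z ^ (2 * c) := by
    simpa using Real.rpow_le_rpow_of_exponent_le hr1 (by linarith : (1 : ℝ) ≤ 2 * c)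
  rw [h.one_add_deriv_sq_eq_rpow ha ha' hz] at hode
  nlinarith

lemma add_one_le_rpow_of_mul_deriv_eq {z₀ : ℝ} (h : SolvesCatenoidODEOn c r (Icc 0 z₀))
    (hc : 1 / 2 ≤ c) (h0 : r 0 = 1) (h0' : deriv r 0 = 0) (hz₀ : 0 ≤ z₀)
    (heq : z₀ * deriv r z₀ = r z₀) : c + 1 ≤ r z₀ ^ (2 * c) := by
  have hz₀' : z₀ ∈ Icc 0 z₀ := right_mem_Icc.2 hz₀
  have hquad := quadratic_le_of_le_deriv_deriv hz₀
    (fun z hz => ⟨(h z hz).2.1, (h z hz).2.2.1⟩) (fun z hz => h.le_deriv_deriv hc h0 h0' hz)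
  rw [h0, h0', zero_mul, add_zero, sub_zero] at hquad
  rw [← h.one_add_deriv_sq_eq_rpow h0 h0' hz₀']
  linarith [le_sq_of_quadratic_le_mul heq hquad]

end SolvesCatenoidODEOn

lemma IsMaxCatenoidProfile.solvesCatenoidODEOn_Icc {n : ℕ} {T : EReal} {z₀ : ℝ}
    (hr : IsMaxCatenoidProfile n T r) (hdom : (z₀ : EReal) ∈ Ioo (-T) T) :
    SolvesCatenoidODEOn ((n : ℝ) - 1) r (Icc 0 z₀) := by
  obtain ⟨hT, hpos, hdiff, -, -, hode, -, -⟩ := hr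
  intro z hz
  have hzT : (z : EReal) ∈ Ioo (-T) T :=
    ⟨(EReal.neg_lt_zero.2 hT).trans_le (EReal.coe_nonneg.2 hz.1),
      (EReal.coe_le_coe_iff.2 hz.2).trans_lt hdom.2⟩
  exact ⟨hpos z hzT, (hdiff z hzT).1, (hdiff z hzT).2, sub_eq_zero.1 (hode z hzT)⟩

/-- If `z₀ > 0` is a point (in the domain of a maximal `n`-catenoid
profile function `r`) where `z₀·r'(z₀) = r(z₀)`, then `r(z₀) ≥ n^(1/(2n−2))`. -/
theorem radial_tangency_height_lower_bound (n : ℕ) (hn : 2 ≤ n)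
    (T : EReal) (r : ℝ → ℝ) (hr : IsMaxCatenoidProfile n T r)
    (z₀ : ℝ) (hz₀ : 0 < z₀) (hdom : ((z₀ : ℝ) : EReal) ∈ Set.Ioo (-T) T)
    (heq : z₀ * deriv r z₀ = r z₀) :
    (n : ℝ) ^ ((1 : ℝ) / (2 * (n : ℝ) - 2)) ≤ r z₀ := by
  have hn' : (2 : ℝ) ≤ n := by exact_mod_cast hn
  have hsol := hr.solvesCatenoidODEOn_Icc hdom
  obtain ⟨-, hpos, -, h0, h0', -⟩ := hr
  have key := hsol.add_one_le_rpow_of_mul_deriv_eq (by linarith) h0 h0' hz₀.le heq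
  rw [sub_add_cancel] at key
  rwa [show 2 * (n : ℝ) - 2 = 2 * ((n : ℝ) - 1) by ring, one_div,
    Real.rpow_inv_le_iff_of_pos (by positivity) (hpos z₀ hdom).le (by linarith)]
end

section
/- Let n ≥ 3 be an integer and let v > 0 be the unique positive real number with cosh((n−1)v) = √n. Then sinh((n−1)v) · ∫₀^v cosh((n−1)s)^((2−n)/(n−1)) ds < n^(1/(2n−2)). -/
/-- For `n ≥ 3` and `v > 0` the unique positive real with
`cosh((n−1)v) = √n`, one has
`sinh((n−1)v) · ∫₀^v cosh((n−1)s)^((2−n)/(n−1)) ds < n^(1/(2n−2))`. -/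
theorem catenoid_reparametrized_integral_estimate (n : ℕ) (hn : 3 ≤ n)
    (v : ℝ) (hv : 0 < v)
    (hcosh : Real.cosh (((n : ℝ) - 1) * v) = Real.sqrt (n : ℝ)) :
    Real.sinh (((n : ℝ) - 1) * v) *
      ∫ s in (0 : ℝ)..v, (Real.cosh (((n : ℝ) - 1) * s)) ^ (((2 : ℝ) - n) / ((n : ℝ) - 1)) <
    (n : ℝ) ^ ((1 : ℝ) / (2 * (n : ℝ) - 2)) := by
  have hn3 : (3 : ℝ) ≤ (n : ℝ) := by exact_mod_cast hn
  have hk : (0 : ℝ) < (n : ℝ) - 1 := by linarith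
  set k : ℝ := (n : ℝ) - 1 with hkdef
  have hkv : 0 < k * v := mul_pos hk hv
  -- sinh (k v) = √(n-1)
  have hsq : Real.sinh (k * v) ^ 2 = (n : ℝ) - 1 := by
    have h1 : Real.cosh (k * v) ^ 2 = (n : ℝ) := by
      rw [hcosh, Real.sq_sqrt (by linarith : (0:ℝ) ≤ (n:ℝ))]
    nlinarith [Real.cosh_sq (k * v)]
  have hsinhpos : 0 < Real.sinh (k * v) := Real.sinh_pos_iff.mpr hkv
  have hsinh : Real.sinh (k * v) = Real.sqrt ((n : ℝ) - 1) := by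
    rw [← Real.sqrt_sq hsinhpos.le, hsq]
  -- (n-1) * v < √(n-1)
  have hx : (0 : ℝ) < Real.sqrt k := Real.sqrt_pos.mpr hk
  have hxsq : Real.sqrt k ^ 2 = k := Real.sq_sqrt hk.le
  have hkvlt : k * v < Real.sqrt k := by
    by_contra h
    push_neg at h
    have hmono : Real.cosh (Real.sqrt k) ≤ Real.cosh (k * v) := by
      have := Real.cosh_le_cosh (x := Real.sqrt k) (y := k * v)
      rw [abs_of_pos hx, abs_of_pos hkv] at this
      exact this.mpr h
    have hsinhgt : Real.sqrt k < Real.sinh (Real.sqrt k) := Real.self_lt_sinh_iff.mpr hx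
    have hc2 : Real.cosh (Real.sqrt k) ^ 2 = Real.sinh (Real.sqrt k) ^ 2 + 1 :=
      Real.cosh_sq _
    have hgt : (n : ℝ) < Real.cosh (Real.sqrt k) ^ 2 := by
      nlinarith
    have : Real.cosh (Real.sqrt k) ^ 2 ≤ (n : ℝ) := by
      have := hmono
      rw [hcosh] at this
      nlinarith [Real.cosh_pos (Real.sqrt k), Real.sq_sqrt (by linarith : (0:ℝ) ≤ (n:ℝ)),
        Real.sqrt_nonneg (n : ℝ)]
    linarith
  -- integral ≤ v
  have hcont : Continuous fun s : ℝ => Real.cosh (k * s) ^ (((2 : ℝ) - n) / k) := by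
    apply Continuous.rpow_const
    · exact Real.continuous_cosh.comp (continuous_const.mul continuous_id)
    · intro x; exact Or.inl (ne_of_gt (Real.cosh_pos _))
  have hintle : (∫ s in (0 : ℝ)..v, Real.cosh (k * s) ^ (((2 : ℝ) - n) / k)) ≤ v := by
    calc (∫ s in (0 : ℝ)..v, Real.cosh (k * s) ^ (((2 : ℝ) - n) / k))
        ≤ ∫ _ in (0 : ℝ)..v, (1 : ℝ) := by
          apply intervalIntegral.integral_mono_on hv.le
            (hcont.intervalIntegrable _ _) (intervalIntegrable_const)
          intro s _
          apply Real.rpow_le_one_of_one_le_of_nonpos (Real.one_le_cosh _)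
          apply div_nonpos_of_nonpos_of_nonneg <;> linarith
      _ = v := by simp
  -- conclude
  have hRHS : (1 : ℝ) ≤ (n : ℝ) ^ ((1 : ℝ) / (2 * (n : ℝ) - 2)) := by
    apply Real.one_le_rpow (by linarith) (div_nonneg zero_le_one (by linarith))
  have hlt1 : Real.sinh (k * v) * v < 1 := by
    rw [hsinh]
    have h1 : Real.sqrt ((n:ℝ) - 1) = Real.sqrt k := rfl
    rw [h1]
    nlinarith
  calc Real.sinh (k * v) * ∫ s in (0 : ℝ)..v, Real.cosh (k * s) ^ (((2 : ℝ) - n) / k)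
      ≤ Real.sinh (k * v) * v := by
        apply mul_le_mul_of_nonneg_left hintle hsinhpos.le
    _ < 1 := hlt1
    _ ≤ _ := hRHS
end

section
/- For every integer n ≥ 3, there exists a unique t₀ > 0 satisfying sinh((n−1)t₀) · ∫₀^{t₀} cosh((n−1)s)^((2−n)/(n−1)) ds = cosh((n−1)t₀)^(1/(n−1)). -/
/-!
With `a = n - 1`, the profile curve is `φ t = cosh (a t) ^ (1/a)`, `ψ t = ∫₀ᵗ φ ^ (1 - a)`, and
the tangency condition `ψ φ' = φ ψ'` reduces to `sinh (a t) ψ t = φ t`. The defect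
`sinh (a t) ψ t - φ t` has derivative `a cosh (a t) ψ t > 0` for `t > 0`, so it is strictly
increasing on `[0, ∞)`; it equals `-1` at `0` and is positive at `2`, because the integrand is
decreasing and hence `ψ 2 ≥ 2 φ 2 / cosh (2a)`. The intermediate value theorem finishes.
-/

open Real Set intervalIntegral

namespace Catenoid

noncomputable def radius (a t : ℝ) : ℝ := cosh (a * t) ^ (1 / a)

noncomputable def height (a t : ℝ) : ℝ := ∫ s in (0 : ℝ)..t, cosh (a * s) ^ (1 / a - 1)

noncomputable def tangencyDefect (a t : ℝ) : ℝ := sinh (a * t) * height a t - radius a t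

lemma continuous_cosh_mul_rpow (a p : ℝ) : Continuous fun s => cosh (a * s) ^ p :=
  (continuous_cosh.comp (continuous_const.mul continuous_id)).rpow_const
    fun _ => Or.inl (cosh_pos _).ne'

lemma hasDerivAt_height (a t : ℝ) : HasDerivAt (height a) (cosh (a * t) ^ (1 / a - 1)) t :=
  (continuous_cosh_mul_rpow a _).integral_hasStrictDerivAt 0 t |>.hasDerivAt

lemma height_pos (a : ℝ) {t : ℝ} (ht : 0 < t) : 0 < height a t :=
  intervalIntegral_pos_of_pos ((continuous_cosh_mul_rpow a _).intervalIntegrable 0 t)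
    (fun _ => rpow_pos_of_pos (cosh_pos _) _) ht

lemma hasDerivAt_radius {a : ℝ} (ha : a ≠ 0) (t : ℝ) :
    HasDerivAt (radius a) (sinh (a * t) * cosh (a * t) ^ (1 / a - 1)) t := by
  have hcosh : HasDerivAt (fun t => cosh (a * t)) (sinh (a * t) * a) t :=
    ((hasDerivAt_id t).const_mul a).cosh.congr_deriv (by simp)
  convert hcosh.rpow_const (p := 1 / a) (Or.inl (cosh_pos _).ne') using 1
  · rfl
  rw [mul_assoc (sinh _), mul_one_div_cancel ha, mul_one]

lemma hasDerivAt_tangencyDefect {a : ℝ} (ha : a ≠ 0) (t : ℝ) :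
    HasDerivAt (tangencyDefect a) (a * cosh (a * t) * height a t) t := by
  have hsinh : HasDerivAt (fun t => sinh (a * t)) (cosh (a * t) * a) t :=
    ((hasDerivAt_id t).const_mul a).sinh.congr_deriv (by simp)
  exact ((hsinh.mul (hasDerivAt_height a t)).sub (hasDerivAt_radius ha t)).congr_deriv (by ring)

lemma strictMonoOn_tangencyDefect {a : ℝ} (ha : 0 < a) :
    StrictMonoOn (tangencyDefect a) (Ici 0) := by
  have hderiv := hasDerivAt_tangencyDefect ha.ne'
  refine strictMonoOn_of_deriv_pos (convex_Ici 0)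
    (fun t _ => (hderiv t).continuousAt.continuousWithinAt) fun t ht => ?_
  rw [interior_Ici] at ht
  rw [(hderiv t).deriv]
  have := height_pos a ht
  positivity

lemma tangencyDefect_zero (a : ℝ) : tangencyDefect a 0 = -1 := by
  simp [tangencyDefect, height, radius]

lemma mul_cosh_rpow_le_height {a t : ℝ} (ha : 1 ≤ a) (ht : 0 ≤ t) :
    t * cosh (a * t) ^ (1 / a - 1) ≤ height a t := by
  have hexp : 1 / a - 1 ≤ 0 := by
    rw [sub_nonpos, div_le_one (by linarith)]
    exact ha
  have hmono : ∀ s ∈ Icc 0 t, cosh (a * t) ^ (1 / a - 1) ≤ cosh (a * s) ^ (1 / a - 1) := by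
    rintro s ⟨hs0, hst⟩
    refine rpow_le_rpow_of_nonpos (cosh_pos _) (cosh_le_cosh.mpr ?_) hexp
    rw [abs_of_nonneg (by positivity), abs_of_nonneg (by positivity)]
    exact mul_le_mul_of_nonneg_left hst (by linarith)
  simpa [height] using integral_mono_on ht (intervalIntegrable_const (μ := MeasureTheory.volume))
    ((continuous_cosh_mul_rpow a _).intervalIntegrable 0 t) hmono

lemma cosh_lt_two_mul_sinh {x : ℝ} (hx : 1 ≤ x) : cosh x < 2 * sinh x := by
  -- `2 sinh x - cosh x = (exp x - 3 exp (-x)) / 2`, and `exp (2x) > 2x + 1 ≥ 3`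
  have h2x : 2 * x + 1 < exp (2 * x) := add_one_lt_exp (by positivity)
  have hsq : exp (2 * x) = exp x * exp x := by rw [← exp_add, two_mul]
  have hinv : exp x * exp (-x) = 1 := by rw [← exp_add, add_neg_cancel, exp_zero]
  rw [cosh_eq, sinh_eq]
  nlinarith [exp_pos x, exp_pos (-x)]

lemma tangencyDefect_two_pos {a : ℝ} (ha : 1 ≤ a) : 0 < tangencyDefect a 2 := by
  have hcosh := cosh_pos (a * 2)
  have hradius : cosh (a * 2) ^ (1 / a - 1) = radius a 2 / cosh (a * 2) := by
    rw [radius, rpow_sub hcosh, rpow_one]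
  have hheight := mul_cosh_rpow_le_height ha zero_le_two
  rw [hradius] at hheight
  have hsinh : cosh (a * 2) < 2 * sinh (a * 2) := cosh_lt_two_mul_sinh (by linarith)
  have hr : 0 < radius a 2 := rpow_pos_of_pos hcosh _
  have key : radius a 2 < sinh (a * 2) * (2 * (radius a 2 / cosh (a * 2))) := by
    rw [← mul_assoc, mul_comm _ 2, mul_div_assoc', lt_div_iff₀ hcosh]
    nlinarith
  unfold tangencyDefect
  nlinarith [sinh_pos_iff.mpr (by linarith : 0 < a * 2)]

theorem existsUnique_pos_sinh_mul_height_eq_radius {a : ℝ} (ha : 1 ≤ a) :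
    ∃! t : ℝ, 0 < t ∧ sinh (a * t) * height a t = radius a t := by
  have hdefect : ∀ t, tangencyDefect a t = 0 ↔ sinh (a * t) * height a t = radius a t :=
    fun t => sub_eq_zero
  simp only [← hdefect]
  have hcont : ContinuousOn (tangencyDefect a) (Icc 0 2) := fun t _ =>
    (hasDerivAt_tangencyDefect (by linarith) t).continuousAt.continuousWithinAt
  obtain ⟨t₀, ht₀, hroot⟩ := intermediate_value_Ioo zero_le_two hcont
    (by rw [tangencyDefect_zero]; exact ⟨by norm_num, tangencyDefect_two_pos ha⟩)
  refine ⟨t₀, ⟨ht₀.1, hroot⟩, fun t ⟨ht, htroot⟩ => ?_⟩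
  exact (strictMonoOn_tangencyDefect (by linarith)).injOn ht.le ht₀.1.le (htroot.trans hroot.symm)

end Catenoid

open Catenoid in
/-- For every integer `n ≥ 3`, there is a unique `t₀ > 0` with
`sinh((n−1)t₀) · ∫₀^{t₀} cosh((n−1)s)^((2−n)/(n−1)) ds = cosh((n−1)t₀)^(1/(n−1))`,
i.e. a unique positive parameter at which the position vector of the `n`-catenoid
profile curve is parallel to its tangent vector. -/
theorem catenoid_unique_positive_radial_tangency (n : ℕ) (hn : 3 ≤ n) :
    ∃! t₀ : ℝ, 0 < t₀ ∧
      Real.sinh (((n : ℝ) - 1) * t₀) *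
        ∫ s in (0 : ℝ)..t₀,
          (Real.cosh (((n : ℝ) - 1) * s)) ^ (((2 : ℝ) - n) / ((n : ℝ) - 1)) =
      (Real.cosh (((n : ℝ) - 1) * t₀)) ^ ((1 : ℝ) / ((n : ℝ) - 1)) := by
  have ha : (1 : ℝ) ≤ n - 1 := by
    have : (3 : ℝ) ≤ n := by exact_mod_cast hn
    linarith
  have hexp : ((2 : ℝ) - n) / ((n : ℝ) - 1) = 1 / ((n : ℝ) - 1) - 1 := by
    field_simp
    ring
  rw [hexp]
  exact existsUnique_pos_sinh_mul_height_eq_radius ha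
end

section
/- Let n ≥ 2 be an integer, let r : (−T, T) → ℝ be a maximal n-catenoid profile function, let z₁(c) < 0 < z₂(c) denote the two solutions of z·r'(z − c) = r(z − c), and let f_i(c) = z_i(c)² + r(z_i(c) − c)². Then f₁'(0) > 0 and f₂'(0) < 0. -/
open Set Filter Topology

theorem taylor_le_of_le_deriv2 {D : Set ℝ} (hD : IsOpen D) (hconv : Convex ℝ D)
    {f f' f'' : ℝ → ℝ} {K a x : ℝ}
    (hf : ∀ y ∈ D, HasDerivAt f (f' y) y) (hf' : ∀ y ∈ D, HasDerivAt f' (f'' y) y)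
    (hK : ∀ y ∈ D, K ≤ f'' y) (ha : a ∈ D) (hx : x ∈ D) :
    f a + f' a * (x - a) + K * (x - a) ^ 2 / 2 ≤ f x := by
  set g : ℝ → ℝ := fun y => f y - f' a * (y - a) - K * (y - a) ^ 2 / 2
  have hg : ∀ y ∈ D, HasDerivAt g (f' y - f' a - K * (y - a)) y := fun y hy => by
    have := ((hf y hy).fun_sub (((hasDerivAt_id' y).sub_const a).const_mul (f' a))).fun_sub
      ((((hasDerivAt_id' y).sub_const a).fun_pow 2).const_mul K |>.div_const 2)
    exact this.congr_deriv (by ring)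
  have hg' : ∀ y ∈ D, HasDerivAt (fun y => f' y - f' a - K * (y - a)) (f'' y - K) y :=
    fun y hy => (((hf' y hy).sub_const (f' a)).fun_sub
      (((hasDerivAt_id' y).sub_const a).const_mul K)).congr_deriv (by ring)
  have hconvex : ConvexOn ℝ D g := by
    refine convexOn_of_hasDerivWithinAt2_nonneg (f' := fun y => f' y - f' a - K * (y - a))
      (f'' := fun y => f'' y - K) hconv
      (fun y hy => (hg y hy).continuousAt.continuousWithinAt) ?_ ?_ ?_ <;> rw [hD.interior_eq]
    · exact fun y hy => (hg y hy).hasDerivWithinAt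
    · exact fun y hy => (hg' y hy).hasDerivWithinAt
    · exact fun y hy => sub_nonneg.2 (hK y hy)
  have hmin : IsMinOn g D a := by
    refine hconvex.isMinOn_of_rightDeriv_eq_zero (by rwa [hD.interior_eq]) ?_
    simpa using ((hg a ha).hasDerivWithinAt).derivWithin (uniqueDiffWithinAt_Ioi a)
  have : g a ≤ g x := hmin hx
  simp only [g, sub_self, mul_zero, ne_eq, OfNat.ofNat_ne_zero, not_false_eq_true,
    zero_pow, zero_div, sub_zero] at this
  linarith

def profileDomain (T : EReal) : Set ℝ := (↑) ⁻¹' Ioo (-T) T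

theorem isOpen_profileDomain (T : EReal) : IsOpen (profileDomain T) :=
  isOpen_Ioo.preimage continuous_coe_real_ereal

theorem convex_profileDomain (T : EReal) : Convex ℝ (profileDomain T) :=
  (ordConnected_Ioo.preimage_mono fun _ _ => EReal.coe_le_coe_iff.2).convex

theorem zero_mem_profileDomain {T : EReal} (hT : 0 < T) : (0 : ℝ) ∈ profileDomain T :=
  ⟨by simpa using hT, by simpa using hT⟩

namespace IsMaxCatenoidProfile

variable {n : ℕ} {T : EReal} {r : ℝ → ℝ} {z w : ℝ}

theorem zero_mem (hr : IsMaxCatenoidProfile n T r) : (0 : ℝ) ∈ profileDomain T :=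
  zero_mem_profileDomain hr.1

theorem pos (hr : IsMaxCatenoidProfile n T r) (hz : z ∈ profileDomain T) : 0 < r z :=
  hr.2.1 z hz

theorem apply_zero (hr : IsMaxCatenoidProfile n T r) : r 0 = 1 :=
  hr.2.2.2.1

theorem deriv_zero (hr : IsMaxCatenoidProfile n T r) : deriv r 0 = 0 :=
  hr.2.2.2.2.1

theorem hasDerivAt (hr : IsMaxCatenoidProfile n T r) (hz : z ∈ profileDomain T) :
    HasDerivAt r (deriv r z) z :=
  (hr.2.2.1 z hz).1.hasDerivAt

theorem hasDerivAt_deriv (hr : IsMaxCatenoidProfile n T r) (hz : z ∈ profileDomain T) :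
    HasDerivAt (deriv r) (deriv (deriv r) z) z :=
  (hr.2.2.1 z hz).2.hasDerivAt

theorem deriv_deriv_eq (hr : IsMaxCatenoidProfile n T r) (hz : z ∈ profileDomain T) :
    deriv (deriv r) z = ((n : ℝ) - 1) * (1 + deriv r z ^ 2) / r z := by
  rw [eq_div_iff (hr.pos hz).ne']
  linarith [hr.2.2.2.2.2.1 z hz]

theorem continuousOn_deriv_deriv (hr : IsMaxCatenoidProfile n T r) :
    ContinuousOn (deriv (deriv r)) (profileDomain T) := by
  have hr' : ContinuousOn (deriv r) (profileDomain T) :=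
    fun z hz => (hr.hasDerivAt_deriv hz).continuousAt.continuousWithinAt
  have hr0 : ContinuousOn r (profileDomain T) :=
    fun z hz => (hr.hasDerivAt hz).continuousAt.continuousWithinAt
  refine ContinuousOn.congr ?_ fun z hz => hr.deriv_deriv_eq hz
  exact (continuousOn_const.mul (continuousOn_const.add (hr'.pow 2))).div hr0
    fun z hz => (hr.pos hz).ne'

theorem hasStrictDerivAt (hr : IsMaxCatenoidProfile n T r) (hz : z ∈ profileDomain T) :
    HasStrictDerivAt r (deriv r z) z :=
  hasStrictDerivAt_of_hasDerivAt_of_continuousAt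
    (eventually_of_mem ((isOpen_profileDomain T).mem_nhds hz) fun _ hy => hr.hasDerivAt hy)
    (hr.hasDerivAt_deriv hz).continuousAt

theorem hasStrictDerivAt_deriv (hr : IsMaxCatenoidProfile n T r) (hz : z ∈ profileDomain T) :
    HasStrictDerivAt (deriv r) (deriv (deriv r) z) z :=
  hasStrictDerivAt_of_hasDerivAt_of_continuousAt
    (eventually_of_mem ((isOpen_profileDomain T).mem_nhds hz) fun _ hy => hr.hasDerivAt_deriv hy)
    (hr.continuousOn_deriv_deriv.continuousAt ((isOpen_profileDomain T).mem_nhds hz))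

theorem one_add_sq_deriv_eq_pow (hn : 2 ≤ n) (hr : IsMaxCatenoidProfile n T r)
    (hz : z ∈ profileDomain T) : 1 + deriv r z ^ 2 = r z ^ (2 * n - 2) := by
  set F : ℝ → ℝ := fun y => (1 + deriv r y ^ 2) / r y ^ (2 * n - 2)
  have hF : ∀ y ∈ profileDomain T, HasDerivAt F 0 y := fun y hy => by
    have hry := (hr.pos hy).ne'
    refine ((((hr.hasDerivAt_deriv hy).fun_pow 2).const_add 1).div
      ((hr.hasDerivAt hy).fun_pow (2 * n - 2)) (pow_ne_zero _ hry)).congr_deriv ?_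
    rw [hr.deriv_deriv_eq hy, div_eq_zero_iff, Nat.cast_sub (by omega),
      show 2 * n - 2 - 1 = 2 * n - 3 by omega, show 2 * n - 2 = 2 * n - 3 + 1 by omega]
    left
    field_simp
    push_cast
    ring
  have hconst := (isOpen_profileDomain T).is_const_of_deriv_eq_zero
    (convex_profileDomain T).isPreconnected
    (fun y hy => (hF y hy).differentiableAt.differentiableWithinAt)
    (fun y hy => (hF y hy).deriv) hz hr.zero_mem
  simp only [F, hr.apply_zero, hr.deriv_zero, one_pow] at hconst
  rw [div_eq_iff (pow_ne_zero _ (hr.pos hz).ne')] at hconst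
  linarith

theorem one_le (hn : 2 ≤ n) (hr : IsMaxCatenoidProfile n T r) (hz : z ∈ profileDomain T) :
    1 ≤ r z :=
  (one_le_pow_iff_of_nonneg (hr.pos hz).le (by omega)).1 <|
    hr.one_add_sq_deriv_eq_pow hn hz ▸ le_add_of_nonneg_right (sq_nonneg _)

theorem sub_one_le_deriv_deriv (hn : 2 ≤ n) (hr : IsMaxCatenoidProfile n T r)
    (hz : z ∈ profileDomain T) : (n : ℝ) - 1 ≤ deriv (deriv r) z := by
  have hr1 := hr.one_le hn hz
  have hrr : r z ≤ 1 + deriv r z ^ 2 := by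
    rw [hr.one_add_sq_deriv_eq_pow hn hz]
    exact le_self_pow₀ hr1 (by omega)
  have hn1 : (0 : ℝ) ≤ n - 1 := by
    have : (2 : ℝ) ≤ n := by exact_mod_cast hn
    linarith
  rw [hr.deriv_deriv_eq hz, le_div_iff₀ (by linarith)]
  exact mul_le_mul_of_nonneg_left hrr hn1

theorem one_add_mul_sq_le (hn : 2 ≤ n) (hr : IsMaxCatenoidProfile n T r)
    (hz : z ∈ profileDomain T) : 1 + ((n : ℝ) - 1) * z ^ 2 / 2 ≤ r z := by
  have := taylor_le_of_le_deriv2 (isOpen_profileDomain T) (convex_profileDomain T)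
    (fun y hy => hr.hasDerivAt hy) (fun y hy => hr.hasDerivAt_deriv hy)
    (fun y hy => hr.sub_one_le_deriv_deriv hn hy) hr.zero_mem hz
  simpa [hr.apply_zero, hr.deriv_zero] using this

theorem sub_one_lt_sq_deriv_of_tangent (hn : 2 ≤ n) (hr : IsMaxCatenoidProfile n T r)
    (hw : w ∈ profileDomain T) (htan : w * deriv r w = r w) : (n : ℝ) - 1 < deriv r w ^ 2 := by
  have hquad := hr.one_add_mul_sq_le hn hw
  have hn1 : (1 : ℝ) ≤ n - 1 := by
    have : (2 : ℝ) ≤ n := by exact_mod_cast hn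
    linarith
  -- with `u = r w = w p`, the quadratic bound gives `(n - 1) u² / 2 ≤ p² (u - 1)`,
  -- impossible when `p² ≤ n - 1` since `u² / 2 - u + 1 > 0`
  set p := deriv r w
  set u := r w
  have hu : 1 ≤ u := le_trans (le_add_of_nonneg_right (by positivity)) hquad
  by_contra! hle
  have h1 : p ^ 2 * (1 + ((n : ℝ) - 1) * w ^ 2 / 2) ≤ p ^ 2 * u :=
    mul_le_mul_of_nonneg_left hquad (sq_nonneg p)
  have h2 : p ^ 2 * (u - 1) ≤ ((n : ℝ) - 1) * (u - 1) :=
    mul_le_mul_of_nonneg_right hle (by linarith)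
  have h3 : p ^ 2 * w ^ 2 = u ^ 2 := by rw [← htan]; ring
  nlinarith [mul_le_mul_of_nonneg_left (sq_nonneg (u - 1)) (by linarith : (0 : ℝ) ≤ n - 1)]

theorem exists_tangent_branch (hn : n ≠ 1) (hr : IsMaxCatenoidProfile n T r)
    (hw : w ∈ profileDomain T) (htan : w * deriv r w = r w) :
    ∃ φ : ℝ → ℝ, φ 0 = w ∧
      HasDerivAt φ (-(deriv r w ^ 2 / (((n : ℝ) - 1) * (1 + deriv r w ^ 2)))) 0 ∧
      ∀ᶠ c in 𝓝 0, φ c ∈ profileDomain T ∧ (φ c + c) * deriv r (φ c) = r (φ c) := by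
  have hp : deriv r w ≠ 0 := fun h => (hr.pos hw).ne' (by rw [← htan, h, mul_zero])
  have hn1 : (n : ℝ) - 1 ≠ 0 := sub_ne_zero.2 (by exact_mod_cast hn)
  set A := -(((n : ℝ) - 1) * (1 + deriv r w ^ 2) / deriv r w ^ 2)
  have hA : A ≠ 0 := neg_ne_zero.2 (div_ne_zero (mul_ne_zero hn1 (by positivity)) (by positivity))
  have hH : HasStrictDerivAt (fun x => r x / deriv r x - x) A w := by
    refine (((hr.hasStrictDerivAt hw).div (hr.hasStrictDerivAt_deriv hw) hp).sub
      (hasStrictDerivAt_id w)).congr_deriv ?_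
    have := (hr.pos hw).ne'
    rw [hr.deriv_deriv_eq hw]
    simp only [A]
    field_simp
    ring
  have hHw : r w / deriv r w - w = 0 := by rw [← htan, mul_div_cancel_right₀ _ hp, sub_self]
  set φ := hH.localInverse _ _ _ hA
  have hφ : HasStrictDerivAt φ A⁻¹ 0 := hHw ▸ hH.to_localInverse hA
  have hφ0 : φ 0 = w := hHw ▸ (hH.eventually_left_inverse hA).self_of_nhds
  refine ⟨φ, hφ0, hφ.hasDerivAt.congr_deriv (by simp only [A]; field_simp), ?_⟩
  have hφw : Tendsto φ (𝓝 0) (𝓝 w) := hφ0 ▸ hφ.hasDerivAt.continuousAt.tendsto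
  have hD := hφw.eventually ((isOpen_profileDomain T).mem_nhds hw)
  have hne := (((hr.hasDerivAt_deriv hw).continuousAt.tendsto.comp hφw).eventually_ne hp)
  filter_upwards [hD, hne, hHw ▸ hH.eventually_right_inverse hA] with c hcD hcne hc
  have hcne : deriv r (φ c) ≠ 0 := hcne
  rw [sub_eq_iff_eq_add, div_eq_iff hcne] at hc
  exact ⟨hcD, by rw [hc]; ring⟩

theorem hasDerivWithinAt_tangent_sqNorm (hn : n ≠ 1) (hr : IsMaxCatenoidProfile n T r)
    {ζ : ℝ → ℝ} (hζ0 : ζ 0 ∈ profileDomain T) (htan : ζ 0 * deriv r (ζ 0) = r (ζ 0))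
    (hζ : ∀ c, 0 ≤ c → ∀ x, x - c ∈ profileDomain T → x * deriv r (x - c) = r (x - c) →
      0 < x * ζ 0 → x = ζ c) :
    HasDerivWithinAt (fun c => ζ c ^ 2 + r (ζ c - c) ^ 2)
      (2 * ζ 0 * (1 - deriv r (ζ 0) ^ 2 / ((n : ℝ) - 1))) (Ici 0) 0 := by
  obtain ⟨φ, hφ0, hφ, hφtan⟩ := hr.exists_tangent_branch hn hζ0 htan
  have hsign : ∀ᶠ c in 𝓝 0, 0 < (φ c + c) * ζ 0 := by
    have hw : 0 < ζ 0 * ζ 0 :=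
      mul_self_pos.2 fun h => (hr.pos hζ0).ne' (by rw [← htan, h, zero_mul])
    have : Tendsto (fun c => (φ c + c) * ζ 0) (𝓝 0) (𝓝 (ζ 0 * ζ 0)) := by
      simpa [hφ0] using (hφ.continuousAt.tendsto.add tendsto_id).mul_const (ζ 0)
    exact this.eventually (lt_mem_nhds hw)
  have hζφ : (fun c => ζ c ^ 2 + r (ζ c - c) ^ 2) =ᶠ[𝓝[≥] 0]
      fun c => (φ c + c) ^ 2 + r (φ c) ^ 2 := by
    filter_upwards [nhdsWithin_le_nhds (hφtan.and hsign), self_mem_nhdsWithin]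
      with c ⟨⟨hcD, hctan⟩, hcsign⟩ hc
    have := hζ c hc (φ c + c) (by simpa using hcD) (by simpa using hctan) hcsign
    rw [← this, add_sub_cancel_right]
  have hrφ : HasDerivAt r (deriv r (ζ 0)) (φ 0) := by
    rw [hφ0]; exact hr.hasDerivAt hζ0
  have hn1 : (n : ℝ) - 1 ≠ 0 := sub_ne_zero.2 (by exact_mod_cast hn)
  refine ((((hφ.fun_add (hasDerivAt_id' 0)).fun_pow 2).fun_add
    ((hrφ.comp 0 hφ).fun_pow 2)).congr_deriv ?_).hasDerivWithinAt.congr_of_eventuallyEq hζφ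
    (by simp [hφ0])
  rw [Function.comp_apply, hφ0, ← htan]
  field_simp
  ring

end IsMaxCatenoidProfile

/-- With `z₁(c) < 0 < z₂(c)` the two radial-tangency points and
`f_i(c) = z_i(c)² + r(z_i(c) − c)²`, one has `f₁'(0) > 0` and `f₂'(0) < 0`
(one-sided derivatives at `0`). -/
theorem squared_radius_derivative_signs_at_zero (n : ℕ) (hn : 2 ≤ n)
    (T : EReal) (r : ℝ → ℝ) (hr : IsMaxCatenoidProfile n T r)
    (z₁ z₂ : ℝ → ℝ)
    (hdom₁ : ∀ c : ℝ, 0 ≤ c → ((z₁ c - c : ℝ) : EReal) ∈ Set.Ioo (-T) T)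
    (hdom₂ : ∀ c : ℝ, 0 ≤ c → ((z₂ c - c : ℝ) : EReal) ∈ Set.Ioo (-T) T)
    (hneg : ∀ c : ℝ, 0 ≤ c → z₁ c < 0)
    (hpos : ∀ c : ℝ, 0 ≤ c → 0 < z₂ c)
    (heq₁ : ∀ c : ℝ, 0 ≤ c → z₁ c * deriv r (z₁ c - c) = r (z₁ c - c))
    (heq₂ : ∀ c : ℝ, 0 ≤ c → z₂ c * deriv r (z₂ c - c) = r (z₂ c - c))
    (huniq : ∀ c : ℝ, 0 ≤ c → ∀ z : ℝ, ((z - c : ℝ) : EReal) ∈ Set.Ioo (-T) T →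
      z * deriv r (z - c) = r (z - c) → z = z₁ c ∨ z = z₂ c)
    (f₁ f₂ : ℝ → ℝ)
    (hf₁ : f₁ = fun c => (z₁ c) ^ 2 + (r (z₁ c - c)) ^ 2)
    (hf₂ : f₂ = fun c => (z₂ c) ^ 2 + (r (z₂ c - c)) ^ 2) :
    0 < derivWithin f₁ (Set.Ici 0) 0 ∧ derivWithin f₂ (Set.Ici 0) 0 < 0 := by
  have hn1 : (0 : ℝ) < n - 1 := by
    have : (2 : ℝ) ≤ n := by exact_mod_cast hn
    linarith
  have hD₁ : z₁ 0 ∈ profileDomain T := sub_zero (z₁ 0) ▸ hdom₁ 0 le_rfl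
  have hD₂ : z₂ 0 ∈ profileDomain T := sub_zero (z₂ 0) ▸ hdom₂ 0 le_rfl
  have htan₁ : z₁ 0 * deriv r (z₁ 0) = r (z₁ 0) := by simpa using heq₁ 0 le_rfl
  have htan₂ : z₂ 0 * deriv r (z₂ 0) = r (z₂ 0) := by simpa using heq₂ 0 le_rfl
  have hf₁' := hr.hasDerivWithinAt_tangent_sqNorm (by omega) hD₁ htan₁ fun c hc x hx hxt hx₁ =>
    (huniq c hc x hx hxt).resolve_right fun h =>
      hx₁.not_gt (h ▸ mul_neg_of_pos_of_neg (hpos c hc) (hneg 0 le_rfl))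
  have hf₂' := hr.hasDerivWithinAt_tangent_sqNorm (by omega) hD₂ htan₂ fun c hc x hx hxt hx₂ =>
    (huniq c hc x hx hxt).resolve_left fun h =>
      hx₂.not_gt (h ▸ mul_neg_of_neg_of_pos (hneg c hc) (hpos 0 le_rfl))
  have hslope₁ : 1 - deriv r (z₁ 0) ^ 2 / ((n : ℝ) - 1) < 0 :=
    sub_neg.2 ((one_lt_div hn1).2 (hr.sub_one_lt_sq_deriv_of_tangent hn hD₁ htan₁))
  have hslope₂ : 1 - deriv r (z₂ 0) ^ 2 / ((n : ℝ) - 1) < 0 :=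
    sub_neg.2 ((one_lt_div hn1).2 (hr.sub_one_lt_sq_deriv_of_tangent hn hD₂ htan₂))
  subst hf₁ hf₂
  rw [hf₁'.derivWithin (uniqueDiffOn_Ici 0 0 self_mem_Ici),
    hf₂'.derivWithin (uniqueDiffOn_Ici 0 0 self_mem_Ici)]
  exact ⟨mul_pos_of_neg_of_neg (by linarith [hneg 0 le_rfl]) hslope₁,
    mul_neg_of_pos_of_neg (by linarith [hpos 0 le_rfl]) hslope₂⟩
end

section
/- Let n ≥ 2 be an integer, let r : (−T, T) → ℝ be a maximal n-catenoid profile function, let z₁(c) < 0 < z₂(c) denote the two solutions of z·r'(z − c) = r(z − c), and let f_i(c) = z_i(c)² + r(z_i(c) − c)². Then for i = 1, 2 and c ≥ 0, ((n−1)/2)·f_i''(c) = n − 3 − 2/(n−1) + (n/(n−1))·( r(z_i(c) − c)^(2n−2) + r(z_i(c) − c)^(2−2n) ). In particular f₁''(0) = f₂''(0). -/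
open Set Filter Topology

theorem ODE_solution_unique_of_contDiffOn_of_mem_Icc {E : Type*} [NormedAddCommGroup E]
    [NormedSpace ℝ E] {v : E → E} {W : Set E} (hW : Convex ℝ W) (hv : ContDiffOn ℝ 1 v W)
    {f g : ℝ → E} {a b : ℝ}
    (hf : ∀ t ∈ Icc a b, HasDerivAt f (v (f t)) t ∧ f t ∈ W)
    (hg : ∀ t ∈ Icc a b, HasDerivAt g (v (g t)) t ∧ g t ∈ W)
    (ha : f a = g a) : EqOn f g (Icc a b) := by
  have hcf : ContinuousOn f (Icc a b) := fun t ht => (hf t ht).1.continuousAt.continuousWithinAt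
  have hcg : ContinuousOn g (Icc a b) := fun t ht => (hg t ht).1.continuousAt.continuousWithinAt
  set K := f '' Icc a b ∪ g '' Icc a b
  have hKW : K ⊆ W := union_subset (image_subset_iff.2 fun t ht => (hf t ht).2)
    (image_subset_iff.2 fun t ht => (hg t ht).2)
  obtain ⟨L, hL⟩ := ((hv.locallyLipschitzOn hW).mono hKW).exists_lipschitzOnWith_of_compact
    ((isCompact_Icc.image_of_continuousOn hcf).union (isCompact_Icc.image_of_continuousOn hcg))
  exact ODE_solution_unique_of_mem_Icc_right (s := fun _ => K) (fun _ _ => hL) hcf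
    (fun t ht => (hf t (Ico_subset_Icc_self ht)).1.hasDerivWithinAt)
    (fun t ht => Or.inl ⟨t, Ico_subset_Icc_self ht, rfl⟩) hcg
    (fun t ht => (hg t (Ico_subset_Icc_self ht)).1.hasDerivWithinAt)
    (fun t ht => Or.inr ⟨t, Ico_subset_Icc_self ht, rfl⟩) ha

theorem HasStrictFDerivAt.exists_implicitFunction_hasDerivAt {Φ : ℝ × ℝ → ℝ}
    {Φ' : ℝ × ℝ →L[ℝ] ℝ} {u : ℝ × ℝ} (hΦ : HasStrictFDerivAt Φ Φ' u) (h₂ : Φ' (0, 1) ≠ 0) :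
    ∃ ψ : ℝ → ℝ, ψ u.1 = u.2 ∧ HasDerivAt ψ (-(Φ' (1, 0) / Φ' (0, 1))) u.1 ∧
      ∀ᶠ c in 𝓝 u.1, Φ (c, ψ c) = Φ u := by
  have hinv : (Φ' ∘L .inr ℝ ℝ ℝ).IsInvertible := by
    refine .of_inverse (g := (Φ' (0, 1))⁻¹ • .id ℝ ℝ) ?_ ?_ <;>
      ext <;> simp [h₂]
  set ψ := hΦ.implicitFunctionOfProdDomain hinv
  have hψu : ψ u.1 = u.2 :=
    ((hΦ.eventually_apply_eq_iff_implicitFunctionOfProdDomain hinv).self_of_nhds).1 rfl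
  have hΦψ := hΦ.eventually_apply_implicitFunctionOfProdDomain hinv
  -- The value of the derivative is read off by differentiating `Φ (c, ψ c) = Φ u`.
  obtain ⟨d, hd⟩ : ∃ d, HasDerivAt ψ d u.1 :=
    ⟨_, (hΦ.hasStrictFDerivAt_implicitFunctionOfProdDomain hinv).hasStrictDerivAt.hasDerivAt⟩
  have hcurve : HasDerivAt (fun c => (c, ψ c)) (1, d) u.1 := (hasDerivAt_id _).prodMk hd
  have hu : (u.1, ψ u.1) = u := by rw [hψu]
  have hcomp : HasDerivAt (fun c => Φ (c, ψ c)) (Φ' (1, d)) u.1 :=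
    (hu ▸ hΦ.hasFDerivAt).comp_hasDerivAt u.1 hcurve
  have hconst : HasDerivAt (fun c => Φ (c, ψ c)) 0 u.1 :=
    (hasDerivAt_const u.1 (Φ u)).congr_of_eventuallyEq hΦψ
  have hlin : Φ' (1, d) = Φ' (1, 0) + d * Φ' (0, 1) := by
    rw [← smul_eq_mul, ← map_smul, ← map_add]
    simp
  refine ⟨ψ, hψu, ?_, hΦψ⟩
  convert hd using 1
  have := hcomp.unique hconst
  field_simp
  linarith

theorem EReal.coe_neg_mem_Ioo {T : EReal} {z : ℝ} (hz : (z : EReal) ∈ Ioo (-T) T) :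
    ((-z : ℝ) : EReal) ∈ Ioo (-T) T := by
  rw [EReal.coe_neg]
  exact ⟨EReal.neg_lt_neg_iff.2 hz.2, EReal.neg_lt_comm.1 hz.1⟩

theorem EReal.coe_zero_mem_Ioo {T : EReal} (hT : 0 < T) : ((0 : ℝ) : EReal) ∈ Ioo (-T) T := by
  rw [EReal.coe_zero]
  exact ⟨EReal.neg_lt_comm.1 (by simpa using hT), hT⟩

structure IsCatenoidSolOn (n : ℕ) (I : Set ℝ) (r : ℝ → ℝ) : Prop where
  pos : ∀ z ∈ I, 0 < r z
  differentiableAt : ∀ z ∈ I, DifferentiableAt ℝ r z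
  differentiableAt_deriv : ∀ z ∈ I, DifferentiableAt ℝ (deriv r) z
  ode : ∀ z ∈ I, r z * deriv (deriv r) z - ((n : ℝ) - 1) * (1 + deriv r z ^ 2) = 0

/-- The catenoid equation `r r'' = (n - 1)(1 + r'²)` as a first-order system for `(r, r')`. -/
noncomputable def catenoidField (n : ℕ) (p : ℝ × ℝ) : ℝ × ℝ :=
  (p.2, ((n : ℝ) - 1) * (1 + p.2 ^ 2) / p.1)

theorem contDiffOn_catenoidField {n : ℕ} : ContDiffOn ℝ 1 (catenoidField n) (Ioi 0 ×ˢ univ) :=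
  contDiffOn_snd.prodMk ((contDiffOn_const.mul (contDiffOn_const.add (contDiffOn_snd.pow 2))).div
    contDiffOn_fst fun _ hp => (mem_prod.1 hp).1.ne')

namespace IsCatenoidSolOn

variable {n : ℕ} {I : Set ℝ} {r : ℝ → ℝ} {z : ℝ}

theorem deriv_deriv_eq (h : IsCatenoidSolOn n I r) (hz : z ∈ I) :
    deriv (deriv r) z = ((n : ℝ) - 1) * (1 + deriv r z ^ 2) / r z := by
  rw [eq_div_iff (h.pos z hz).ne']
  linarith [h.ode z hz]

theorem hasStrictDerivAt (h : IsCatenoidSolOn n I r) (hI : IsOpen I) (hz : z ∈ I) :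
    HasStrictDerivAt r (deriv r z) z :=
  hasStrictDerivAt_of_hasDerivAt_of_continuousAt
    (eventually_of_mem (hI.mem_nhds hz) fun y hy => (h.differentiableAt y hy).hasDerivAt)
    (h.differentiableAt_deriv z hz).continuousAt

theorem hasStrictDerivAt_deriv (h : IsCatenoidSolOn n I r) (hI : IsOpen I) (hz : z ∈ I) :
    HasStrictDerivAt (deriv r) (deriv (deriv r) z) z := by
  refine hasStrictDerivAt_of_hasDerivAt_of_continuousAt
    (eventually_of_mem (hI.mem_nhds hz) fun y hy => (h.differentiableAt_deriv y hy).hasDerivAt) ?_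
  have hcont : ContinuousAt (fun y => ((n : ℝ) - 1) * (1 + deriv r y ^ 2) / r y) z :=
    (continuousAt_const.mul (continuousAt_const.add
      ((h.differentiableAt_deriv z hz).continuousAt.pow 2))).div
      (h.differentiableAt z hz).continuousAt (h.pos z hz).ne'
  exact hcont.congr (eventually_of_mem (hI.mem_nhds hz) fun y hy => (h.deriv_deriv_eq hy).symm)

theorem one_add_sq_deriv_eq_pow (h : IsCatenoidSolOn n I r) (hn : 1 ≤ n) (hI : IsOpen I)
    (hI' : I.OrdConnected) (h0 : 0 ∈ I) (hr0 : r 0 = 1) (hr'0 : deriv r 0 = 0) (hz : z ∈ I) :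
    1 + deriv r z ^ 2 = r z ^ (2 * n - 2) := by
  set H : ℝ → ℝ := fun y => (1 + deriv r y ^ 2) * r y ^ (2 - 2 * (n : ℤ))
  have hH : ∀ y ∈ I, HasDerivAt H 0 y := by
    intro y hy
    have hr := (h.pos y hy).ne'
    have := ((h.differentiableAt_deriv y hy).hasDerivAt.pow 2).const_add 1 |>.mul
      ((hasDerivAt_zpow (2 - 2 * (n : ℤ)) (r y) (Or.inl hr)).comp y
        (h.differentiableAt y hy).hasDerivAt)
    refine this.congr_deriv ?_
    simp only [Function.comp_apply, Pi.pow_apply]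
    rw [h.deriv_deriv_eq hy, zpow_sub_one₀ hr]
    push_cast
    field_simp
    ring
  have hconst : H z = H 0 := hI.is_const_of_deriv_eq_zero hI'.isPreconnected
    (fun y hy => (hH y hy).differentiableAt.differentiableWithinAt)
    (fun y hy => (hH y hy).deriv) hz h0
  have hH0 : H 0 = 1 := by simp [H, hr0, hr'0]
  have hexp : ((2 * n - 2 : ℕ) : ℤ) = -(2 - 2 * (n : ℤ)) := by omega
  rw [← zpow_natCast (r z), hexp, zpow_neg]
  exact eq_inv_of_mul_eq_one_left (hconst.trans hH0)

theorem hasDerivAt_phase (h : IsCatenoidSolOn n I r) (hz : z ∈ I) :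
    HasDerivAt (fun t => (r t, deriv r t)) (catenoidField n (r z, deriv r z)) z := by
  refine ((h.differentiableAt z hz).hasDerivAt.prodMk
    (h.differentiableAt_deriv z hz).hasDerivAt).congr_deriv ?_
  simp only [catenoidField, h.deriv_deriv_eq hz]

theorem hasDerivAt_reflected_phase (h : IsCatenoidSolOn n I r) (hz : -z ∈ I) :
    HasDerivAt (fun t => (r (-t), -deriv r (-t))) (catenoidField n (r (-z), -deriv r (-z))) z := by
  refine (((h.differentiableAt (-z) hz).hasDerivAt.comp z (hasDerivAt_neg z)).prodMk
    ((h.differentiableAt_deriv (-z) hz).hasDerivAt.comp z (hasDerivAt_neg z)).neg).congr_deriv ?_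
  simp only [catenoidField, h.deriv_deriv_eq hz, Prod.ext_iff]
  constructor <;> ring

theorem apply_neg (h : IsCatenoidSolOn n I r) (hI : I.OrdConnected) (hneg : ∀ z ∈ I, -z ∈ I)
    (hr'0 : deriv r 0 = 0) (hz : z ∈ I) : r (-z) = r z ∧ deriv r (-z) = -deriv r z := by
  suffices key : ∀ a ∈ I, 0 ≤ a → r (-a) = r a ∧ deriv r (-a) = -deriv r a by
    rcases le_total 0 z with hz0 | hz0
    · exact key z hz hz0
    · obtain ⟨h₁, h₂⟩ := key (-z) (hneg z hz) (neg_nonneg.2 hz0)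
      rw [neg_neg] at h₁ h₂
      exact ⟨h₁.symm, by linarith⟩
  intro a ha ha0
  have hmem : ∀ t ∈ Icc 0 a, t ∈ I ∧ -t ∈ I := fun t ht =>
    have htI : t ∈ I := hI.out (hI.out (hneg a ha) ha ⟨by linarith, ha0⟩) ha ht
    ⟨htI, hneg t htI⟩
  have := ODE_solution_unique_of_contDiffOn_of_mem_Icc ((convex_Ioi 0).prod convex_univ)
    contDiffOn_catenoidField
    (fun t ht => ⟨h.hasDerivAt_phase (hmem t ht).1, h.pos t (hmem t ht).1, trivial⟩)
    (fun t ht => ⟨h.hasDerivAt_reflected_phase (hmem t ht).2, h.pos _ (hmem t ht).2, trivial⟩)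
    (by simp [hr'0]) ⟨ha0, le_rfl⟩
  simp only [Prod.ext_iff] at this
  exact ⟨this.1.symm, by linarith [this.2]⟩

end IsCatenoidSolOn

theorem IsMaxCatenoidProfile.isCatenoidSolOn {n : ℕ} {T : EReal} {r : ℝ → ℝ}
    (hr : IsMaxCatenoidProfile n T r) :
    IsCatenoidSolOn n (((↑) : ℝ → EReal) ⁻¹' Ioo (-T) T) r :=
  ⟨hr.2.1, fun z hz => (hr.2.2.1 z hz).1, fun z hz => (hr.2.2.1 z hz).2, hr.2.2.2.2.2.1⟩

/-- `z c` is the only point of `S` at which the tangent line to the translated profile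
`x ↦ r (x - c)` passes through the origin. -/
structure IsTangencyBranch (r : ℝ → ℝ) (I S s : Set ℝ) (z : ℝ → ℝ) : Prop where
  sub_mem : ∀ c ∈ s, z c - c ∈ I
  mem : ∀ c ∈ s, z c ∈ S
  tangent : ∀ c ∈ s, z c * deriv r (z c - c) = r (z c - c)
  unique : ∀ c ∈ s, ∀ x ∈ S, x - c ∈ I → x * deriv r (x - c) = r (x - c) → x = z c

namespace IsTangencyBranch

variable {n : ℕ} {r z : ℝ → ℝ} {I S s : Set ℝ} {c : ℝ}

theorem deriv_ne_zero (hz : IsTangencyBranch r I S s z) (h : IsCatenoidSolOn n I r)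
    (hc : c ∈ s) : deriv r (z c - c) ≠ 0 := by
  intro h0
  have := hz.tangent c hc
  rw [h0, mul_zero] at this
  exact (h.pos _ (hz.sub_mem c hc)).ne' this.symm

theorem hasDerivWithinAt (hz : IsTangencyBranch r I S s z) (h : IsCatenoidSolOn n I r)
    (hn : n ≠ 1) (hI : IsOpen I) (hS : IsOpen S) (hc : c ∈ s) :
    HasDerivWithinAt z
      (1 - deriv r (z c - c) ^ 2 / (((n : ℝ) - 1) * (1 + deriv r (z c - c) ^ 2))) s c := by
  have hw := hz.sub_mem c hc
  have hP := hz.deriv_ne_zero h hc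
  have hn' : (n : ℝ) - 1 ≠ 0 := sub_ne_zero.2 (by exact_mod_cast hn)
  have hzQ : z c * deriv (deriv r) (z c - c) =
      ((n : ℝ) - 1) * (1 + deriv r (z c - c) ^ 2) / deriv r (z c - c) := by
    have hz0 : z c ≠ 0 := left_ne_zero_of_mul ((hz.tangent c hc).trans_ne (h.pos _ hw).ne')
    rw [h.deriv_deriv_eq hw, ← hz.tangent c hc]
    field_simp
  have hzQ0 : z c * deriv (deriv r) (z c - c) ≠ 0 := by rw [hzQ]; positivity
  have hm : HasStrictFDerivAt (fun p : ℝ × ℝ => p.2 - p.1)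
      (ContinuousLinearMap.snd ℝ ℝ ℝ - ContinuousLinearMap.fst ℝ ℝ ℝ) (c, z c) :=
    hasStrictFDerivAt_snd.sub hasStrictFDerivAt_fst
  have hΦ := (hasStrictFDerivAt_snd.mul
    ((h.hasStrictDerivAt_deriv hI hw).comp_hasStrictFDerivAt (c, z c) hm)).sub
    ((h.hasStrictDerivAt hI hw).comp_hasStrictFDerivAt (c, z c) hm)
  obtain ⟨ψ, hψc, hψ, hψeq⟩ := hΦ.exists_implicitFunction_hasDerivAt (by simpa using hzQ0)
  simp only [Pi.sub_apply, Pi.mul_apply, Function.comp_apply, hz.tangent c hc, sub_self]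
    at hψc hψeq
  have hψmem : ∀ᶠ c' in 𝓝 c, ψ c' ∈ S ∧ ψ c' - c' ∈ I :=
    (hψ.continuousAt.eventually_mem (hS.mem_nhds (hψc ▸ hz.mem c hc))).and
      ((hψ.continuousAt.sub continuousAt_id).eventually_mem (hI.mem_nhds (hψc ▸ hw)))
  -- Near `c`, `ψ c'` is a tangency point in `S`, so uniqueness forces it to be `z c'`.
  have hzψ : z =ᶠ[𝓝[s] c] ψ := by
    filter_upwards [nhdsWithin_le_nhds (hψeq.and hψmem), self_mem_nhdsWithin]
      with c' ⟨htangent, hS', hI'⟩ hc'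
    exact (hz.unique c' hc' _ hS' hI' (sub_eq_zero.1 htangent)).symm
  refine (hψ.hasDerivWithinAt.congr_of_eventuallyEq hzψ hψc.symm).congr_deriv ?_
  simp only [Function.comp_apply, sub_apply, add_apply, smul_apply, ContinuousLinearMap.coe_snd',
    ContinuousLinearMap.coe_fst', zero_sub, smul_eq_mul, mul_neg, mul_one, mul_zero, add_zero,
    sub_neg_eq_add, sub_zero, add_sub_cancel_right]
  rw [hzQ]
  field_simp
  ring

theorem hasDerivWithinAt_comp_sub (hz : IsTangencyBranch r I S s z) (h : IsCatenoidSolOn n I r)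
    (hn : n ≠ 1) (hI : IsOpen I) (hS : IsOpen S) (hc : c ∈ s) {g : ℝ → ℝ}
    (hg : DifferentiableAt ℝ g (z c - c)) :
    HasDerivWithinAt (fun c => g (z c - c)) (deriv g (z c - c) *
      (1 - deriv r (z c - c) ^ 2 / (((n : ℝ) - 1) * (1 + deriv r (z c - c) ^ 2)) - 1)) s c :=
  hg.hasDerivAt.comp_hasDerivWithinAt (h := fun c => z c - c) c
    ((hz.hasDerivWithinAt h hn hI hS hc).sub (hasDerivWithinAt_id c s))

theorem hasDerivWithinAt_sqNorm (hz : IsTangencyBranch r I S s z) (h : IsCatenoidSolOn n I r)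
    (hn : n ≠ 1) (hI : IsOpen I) (hS : IsOpen S) (hc : c ∈ s) :
    HasDerivWithinAt (fun c => z c ^ 2 + r (z c - c) ^ 2)
      (2 * r (z c - c) / deriv r (z c - c) -
        2 * r (z c - c) * deriv r (z c - c) / ((n : ℝ) - 1)) s c := by
  have hP := hz.deriv_ne_zero h hc
  have hn' : (n : ℝ) - 1 ≠ 0 := sub_ne_zero.2 (by exact_mod_cast hn)
  refine (((hz.hasDerivWithinAt h hn hI hS hc).pow 2).add ((hz.hasDerivWithinAt_comp_sub h hn hI
    hS hc (h.differentiableAt _ (hz.sub_mem c hc))).pow 2)).congr_deriv ?_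
  rw [← hz.tangent c hc]
  field_simp
  ring

theorem half_mul_derivWithin_derivWithin_sqNorm (hz : IsTangencyBranch r I S s z)
    (h : IsCatenoidSolOn n I r) (hn : 2 ≤ n) (hI : IsOpen I) (hS : IsOpen S)
    (hs : UniqueDiffOn ℝ s) (hfirst : ∀ w ∈ I, 1 + deriv r w ^ 2 = r w ^ (2 * n - 2))
    (hc : c ∈ s) :
    ((n : ℝ) - 1) / 2 * derivWithin (derivWithin (fun c => z c ^ 2 + r (z c - c) ^ 2) s) s c =
      (n : ℝ) - 3 - 2 / ((n : ℝ) - 1) + (n : ℝ) / ((n : ℝ) - 1) *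
        (r (z c - c) ^ (2 * n - 2) + (r (z c - c) ^ (2 * n - 2))⁻¹) := by
  have hn1 : n ≠ 1 := by omega
  have hw := hz.sub_mem c hc
  have hP := hz.deriv_ne_zero h hc
  have hR := (h.pos _ hw).ne'
  have hn' : (n : ℝ) - 1 ≠ 0 := sub_ne_zero.2 (by exact_mod_cast hn1)
  have hfirstDeriv : EqOn (derivWithin (fun c => z c ^ 2 + r (z c - c) ^ 2) s)
      (fun c => 2 * r (z c - c) / deriv r (z c - c) -
        2 * r (z c - c) * deriv r (z c - c) / ((n : ℝ) - 1)) s := fun c' hc' =>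
    (hz.hasDerivWithinAt_sqNorm h hn1 hI hS hc').derivWithin (hs c' hc')
  have hr' := hz.hasDerivWithinAt_comp_sub h hn1 hI hS hc (h.differentiableAt _ hw)
  have hr'' := hz.hasDerivWithinAt_comp_sub h hn1 hI hS hc (h.differentiableAt_deriv _ hw)
  have hsecond : HasDerivWithinAt (fun c => 2 * r (z c - c) / deriv r (z c - c) -
      2 * r (z c - c) * deriv r (z c - c) / ((n : ℝ) - 1)) _ s c :=
    ((hr'.const_mul 2).div hr'' hP).sub (((hr'.const_mul 2).mul hr'').div_const _)
  rw [derivWithin_congr hfirstDeriv (hfirstDeriv hc), hsecond.derivWithin (hs c hc), ← hfirst _ hw,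
    h.deriv_deriv_eq hw]
  field_simp
  ring

theorem eq_neg_of_tangent (hz : IsTangencyBranch r I S s z) (h : IsCatenoidSolOn n I r)
    (hI : I.OrdConnected) (hneg : ∀ x ∈ I, -x ∈ I) (hr'0 : deriv r 0 = 0) (h0 : 0 ∈ s)
    {x : ℝ} (hx : x ∈ I) (hxS : -x ∈ S) (hxt : x * deriv r x = r x) : z 0 = -x := by
  obtain ⟨hr_neg, hr'_neg⟩ := h.apply_neg hI hneg hr'0 hx
  refine (hz.unique 0 h0 (-x) hxS (by rw [sub_zero]; exact hneg x hx) ?_).symm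
  rw [sub_zero, hr_neg, hr'_neg, neg_mul_neg, hxt]

end IsTangencyBranch

/-- With `z₁(c) < 0 < z₂(c)` the two radial-tangency points and
`f_i(c) = z_i(c)² + r(z_i(c) − c)²`, for `i = 1, 2` and `c ≥ 0` one has
`((n−1)/2)·f_i''(c) = n − 3 − 2/(n−1) + (n/(n−1))·(r^(2n−2) + r^(2−2n))`, where `r`
is evaluated at `z_i(c) − c`; in particular `f₁''(0) = f₂''(0)`. -/
theorem squared_radius_second_derivative_formula (n : ℕ) (hn : 2 ≤ n)
    (T : EReal) (r : ℝ → ℝ) (hr : IsMaxCatenoidProfile n T r)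
    (z₁ z₂ : ℝ → ℝ)
    (hdom₁ : ∀ c : ℝ, 0 ≤ c → ((z₁ c - c : ℝ) : EReal) ∈ Set.Ioo (-T) T)
    (hdom₂ : ∀ c : ℝ, 0 ≤ c → ((z₂ c - c : ℝ) : EReal) ∈ Set.Ioo (-T) T)
    (hneg : ∀ c : ℝ, 0 ≤ c → z₁ c < 0)
    (hpos : ∀ c : ℝ, 0 ≤ c → 0 < z₂ c)
    (heq₁ : ∀ c : ℝ, 0 ≤ c → z₁ c * deriv r (z₁ c - c) = r (z₁ c - c))
    (heq₂ : ∀ c : ℝ, 0 ≤ c → z₂ c * deriv r (z₂ c - c) = r (z₂ c - c))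
    (huniq : ∀ c : ℝ, 0 ≤ c → ∀ z : ℝ, ((z - c : ℝ) : EReal) ∈ Set.Ioo (-T) T →
      z * deriv r (z - c) = r (z - c) → z = z₁ c ∨ z = z₂ c)
    (f₁ f₂ : ℝ → ℝ)
    (hf₁ : f₁ = fun c => (z₁ c) ^ 2 + (r (z₁ c - c)) ^ 2)
    (hf₂ : f₂ = fun c => (z₂ c) ^ 2 + (r (z₂ c - c)) ^ 2) :
    (∀ c : ℝ, 0 ≤ c →
      (((n : ℝ) - 1) / 2) * derivWithin (derivWithin f₁ (Set.Ici 0)) (Set.Ici 0) c =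
        (n : ℝ) - 3 - 2 / ((n : ℝ) - 1) +
          (n : ℝ) / ((n : ℝ) - 1) *
            ((r (z₁ c - c)) ^ (2 * n - 2) + ((r (z₁ c - c)) ^ (2 * n - 2))⁻¹)) ∧
    (∀ c : ℝ, 0 ≤ c →
      (((n : ℝ) - 1) / 2) * derivWithin (derivWithin f₂ (Set.Ici 0)) (Set.Ici 0) c =
        (n : ℝ) - 3 - 2 / ((n : ℝ) - 1) +
          (n : ℝ) / ((n : ℝ) - 1) *
            ((r (z₂ c - c)) ^ (2 * n - 2) + ((r (z₂ c - c)) ^ (2 * n - 2))⁻¹)) ∧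
    derivWithin (derivWithin f₁ (Set.Ici 0)) (Set.Ici 0) 0 =
      derivWithin (derivWithin f₂ (Set.Ici 0)) (Set.Ici 0) 0 := by
  subst hf₁ hf₂
  set I : Set ℝ := ((↑) : ℝ → EReal) ⁻¹' Ioo (-T) T
  have hsol : IsCatenoidSolOn n I r := hr.isCatenoidSolOn
  obtain ⟨hT, -, -, hr0, hr'0, -, -, -⟩ := hr
  have hI : IsOpen I := isOpen_Ioo.preimage continuous_coe_real_ereal
  have hIc : I.OrdConnected := ordConnected_Ioo.preimage_mono EReal.coe_strictMono.monotone
  have hnegI : ∀ x ∈ I, -x ∈ I := fun x hx => EReal.coe_neg_mem_Ioo hx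
  have hfirst : ∀ w ∈ I, 1 + deriv r w ^ 2 = r w ^ (2 * n - 2) := fun w hw =>
    hsol.one_add_sq_deriv_eq_pow (by omega) hI hIc (EReal.coe_zero_mem_Ioo hT) hr0 hr'0 hw
  have hb₁ : IsTangencyBranch r I (Iio 0) (Ici 0) z₁ := ⟨hdom₁, hneg, heq₁,
    fun c hc x hx hxI hxt => (huniq c hc x hxI hxt).resolve_right
      fun h => (hpos c hc).not_gt (h ▸ hx)⟩
  have hb₂ : IsTangencyBranch r I (Ioi 0) (Ici 0) z₂ := ⟨hdom₂, hpos, heq₂,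
    fun c hc x hx hxI hxt => (huniq c hc x hxI hxt).resolve_left
      fun h => (hneg c hc).not_gt (h ▸ hx)⟩
  have hf₁'' := fun c (hc : c ∈ Ici 0) => hb₁.half_mul_derivWithin_derivWithin_sqNorm hsol hn hI
    isOpen_Iio (uniqueDiffOn_Ici 0) hfirst hc
  have hf₂'' := fun c (hc : c ∈ Ici 0) => hb₂.half_mul_derivWithin_derivWithin_sqNorm hsol hn hI
    isOpen_Ioi (uniqueDiffOn_Ici 0) hfirst hc
  refine ⟨hf₁'', hf₂'', ?_⟩
  have hz₂ : z₂ 0 ∈ I := by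
    rw [← sub_zero (z₂ 0)]
    exact hdom₂ 0 le_rfl
  have hsym : z₁ 0 = -z₂ 0 := hb₁.eq_neg_of_tangent hsol hIc hnegI hr'0 self_mem_Ici hz₂
    (neg_neg_of_pos (hpos 0 le_rfl)) (by simpa only [sub_zero] using heq₂ 0 le_rfl)
  have hn' : ((n : ℝ) - 1) / 2 ≠ 0 :=
    (div_pos (sub_pos.2 (by exact_mod_cast (by omega : 1 < n))) two_pos).ne'
  refine mul_left_cancel₀ hn' ((hf₁'' 0 self_mem_Ici).trans ?_)
  rw [hf₂'' 0 self_mem_Ici, hsym, sub_zero, sub_zero, (hsol.apply_neg hIc hnegI hr'0 hz₂).1]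
end

section
/- Let m, n ≥ 2 be integers, let Ω = (0, π/2) × (−π, π), and define V : Ω → ℝ² by V(φ, θ) = ( sin(2φ)·sin(θ − φ), 2·((n−1)·cos θ·cos φ − (m−1)·sin θ·sin φ) ). Let φ₁ = arctan(√((n−1)/(m−1))) ∈ (0, π/2). Then V(φ, θ) = (0, 0) for (φ, θ) ∈ Ω if and only if (φ, θ) = (φ₁, φ₁) or (φ, θ) = (φ₁, φ₁ − π); i.e., V has exactly two zeros in Ω. -/
open Real in
/-- For integers `m, n ≥ 2`, the vector field
`V(φ, θ) = (sin 2φ · sin(θ − φ), 2((n−1)cos θ cos φ − (m−1)sin θ sin φ))` on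
`Ω = (0, π/2) × (−π, π)` has exactly two zeros, namely `(φ₁, φ₁)` and `(φ₁, φ₁ − π)`
where `φ₁ = arctan √((n−1)/(m−1))`. -/
theorem profile_vector_field_two_zeros (m n : ℕ) (hm : 2 ≤ m) (hn : 2 ≤ n)
    (φ₁ : ℝ) (hφ₁ : φ₁ = arctan (Real.sqrt (((n : ℝ) - 1) / ((m : ℝ) - 1)))) :
    φ₁ ∈ Set.Ioo 0 (π / 2) ∧
    ∀ φ θ : ℝ, φ ∈ Set.Ioo 0 (π / 2) → θ ∈ Set.Ioo (-π) π →
      ((sin (2 * φ) * sin (θ - φ) = 0 ∧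
        2 * (((n : ℝ) - 1) * cos θ * cos φ - ((m : ℝ) - 1) * sin θ * sin φ) = 0) ↔
       ((φ = φ₁ ∧ θ = φ₁) ∨ (φ = φ₁ ∧ θ = φ₁ - π))) := by
  have hm' : (0:ℝ) < (m:ℝ) - 1 := by
    have : (2:ℝ) ≤ (m:ℝ) := by exact_mod_cast hm
    linarith
  have hn' : (0:ℝ) < (n:ℝ) - 1 := by
    have : (2:ℝ) ≤ (n:ℝ) := by exact_mod_cast hn
    linarith
  obtain ⟨s, hs_def⟩ : ∃ s : ℝ, s = ((n:ℝ) - 1) / ((m:ℝ) - 1) := ⟨_, rfl⟩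
  rw [← hs_def] at hφ₁
  have hs : 0 < s := hs_def ▸ div_pos hn' hm'
  have ha : 0 < Real.sqrt s := Real.sqrt_pos.mpr hs
  have ha2 : Real.sqrt s * Real.sqrt s = s := Real.mul_self_sqrt hs.le
  have hms : ((m:ℝ) - 1) * s = (n:ℝ) - 1 := by
    rw [hs_def, mul_div_cancel₀ _ hm'.ne']
  have hsq : ((m:ℝ) - 1) * (Real.sqrt s * Real.sqrt s) = (n:ℝ) - 1 := by
    rw [ha2]; exact hms
  have hφ₁mem : φ₁ ∈ Set.Ioo 0 (π / 2) := by
    rw [hφ₁]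
    refine ⟨?_, Real.arctan_lt_pi_div_two _⟩
    have := Real.arctan_strictMono ha
    rwa [Real.arctan_zero] at this
  have htanφ₁ : Real.tan φ₁ = Real.sqrt s := by rw [hφ₁, Real.tan_arctan]
  have hcos₁ : 0 < Real.cos φ₁ :=
    Real.cos_pos_of_mem_Ioo ⟨by linarith [hφ₁mem.1, Real.pi_pos], hφ₁mem.2⟩
  have hsin₁ : Real.sin φ₁ = Real.sqrt s * Real.cos φ₁ := by
    have h := htanφ₁
    rw [Real.tan_eq_sin_div_cos, div_eq_iff hcos₁.ne'] at h
    linarith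
  -- key equation at φ₁
  have hkey₁ : ((n:ℝ) - 1) * Real.cos φ₁ * Real.cos φ₁
      - ((m:ℝ) - 1) * Real.sin φ₁ * Real.sin φ₁ = 0 := by
    rw [hsin₁]
    linear_combination (-(Real.cos φ₁ * Real.cos φ₁)) * hsq
  refine ⟨hφ₁mem, ?_⟩
  rintro φ θ ⟨hφ0, hφπ⟩ ⟨hθl, hθr⟩
  have hπ := Real.pi_pos
  have hcos : 0 < Real.cos φ := Real.cos_pos_of_mem_Ioo ⟨by linarith, hφπ⟩
  have hsin : 0 < Real.sin φ := Real.sin_pos_of_pos_of_lt_pi hφ0 (by linarith)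
  have key : (((n:ℝ) - 1) * Real.cos φ * Real.cos φ
      - ((m:ℝ) - 1) * Real.sin φ * Real.sin φ = 0) ↔ φ = φ₁ := by
    constructor
    · intro h
      have hBA : ((m:ℝ) - 1) * ((Real.sqrt s * Real.cos φ) * (Real.sqrt s * Real.cos φ)
          - Real.sin φ * Real.sin φ) = 0 := by
        linear_combination (Real.cos φ * Real.cos φ) * hsq + h
      have hX := (mul_eq_zero.mp hBA).resolve_left hm'.ne'
      have hfac : (Real.sqrt s * Real.cos φ - Real.sin φ)
          * (Real.sqrt s * Real.cos φ + Real.sin φ) = 0 := by linear_combination hX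
      have hsum : 0 < Real.sqrt s * Real.cos φ + Real.sin φ := by positivity
      have hsc : Real.sin φ = Real.sqrt s * Real.cos φ := by
        have h5 := (mul_eq_zero.mp hfac).resolve_right hsum.ne'
        linarith
      have htan2 : Real.tan φ = Real.sqrt s := by
        rw [Real.tan_eq_sin_div_cos, hsc, mul_div_assoc, div_self hcos.ne', mul_one]
      rw [hφ₁, ← htan2, Real.arctan_tan (by linarith) hφπ]
    · intro h
      rw [h]; exact hkey₁
  constructor
  · rintro ⟨h1, h2⟩
    have hsin2 : 0 < Real.sin (2 * φ) := by
      rw [Real.sin_two_mul]; positivity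
    have h1' : Real.sin (θ - φ) = 0 := by
      rcases mul_eq_zero.mp h1 with h | h
      · exact absurd h hsin2.ne'
      · exact h
    obtain ⟨k, hk⟩ := Real.sin_eq_zero_iff.mp h1'
    have hk1 : (k:ℝ) < 1 := by nlinarith
    have hk2 : (-2:ℝ) < (k:ℝ) := by nlinarith
    have hk1' : k ≤ 0 := by exact_mod_cast Int.lt_add_one_iff.mp (by exact_mod_cast hk1)
    have hk2' : -1 ≤ k := by
      have : (-2:ℤ) < k := by exact_mod_cast hk2
      omega
    interval_cases k
    · -- k = -1 : θ = φ - π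
      have hθ : θ = φ - π := by push_cast at hk; linarith
      right
      have h2' : ((n:ℝ) - 1) * Real.cos φ * Real.cos φ
          - ((m:ℝ) - 1) * Real.sin φ * Real.sin φ = 0 := by
        rw [hθ, Real.cos_sub_pi, Real.sin_sub_pi] at h2
        linear_combination (-1/2 : ℝ) * h2
      have hφeq := key.mp h2'
      exact ⟨hφeq, by rw [hθ, hφeq]⟩
    · -- k = 0 : θ = φ
      have hθ : θ = φ := by push_cast at hk; linarith
      left
      have h2' : ((n:ℝ) - 1) * Real.cos φ * Real.cos φ
          - ((m:ℝ) - 1) * Real.sin φ * Real.sin φ = 0 := by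
        rw [hθ] at h2; linear_combination (1/2 : ℝ) * h2
      have hφeq := key.mp h2'
      exact ⟨hφeq, by rw [hθ, hφeq]⟩
  · rintro (⟨hφeq, hθeq⟩ | ⟨hφeq, hθeq⟩)
    · subst hφeq; subst hθeq
      refine ⟨by simp, by linear_combination (2:ℝ) * hkey₁⟩
    · subst hφeq; subst hθeq
      constructor
      · have h : φ - π - φ = -π := by ring
        rw [h]; simp
      · rw [Real.cos_sub_pi, Real.sin_sub_pi]
        linear_combination (-2:ℝ) * hkey₁
end

section
/- Let m, n ≥ 2 be integers, let V(φ, θ) = ( sin(2φ)·sin(θ − φ), 2·((n−1)·cos θ·cos φ − (m−1)·sin θ·sin φ) ), and let φ₁ = arctan(√((n−1)/(m−1))). Then the Jacobian matrix J of V at the zero p₁ = (φ₁, φ₁) has trace −(m+n−1)·sin(2φ₁) and determinant 2(m+n−2)·sin²(2φ₁), so its characteristic polynomial has discriminant sin²(2φ₁)·((m+n)² − 10(m+n) + 17). Consequently, the eigenvalues of J are non-real if and only if m+n < 8 (i.e., 4 ≤ m+n ≤ 7), and are real if m+n ≥ 8. -/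
open Real in
private lemma charpoly_eval_fin_two (M : Matrix (Fin 2) (Fin 2) ℝ) (x : ℝ) :
    (Matrix.charpoly M).eval x = x ^ 2 - Matrix.trace M * x + M.det := by
  rw [Matrix.charpoly, Matrix.det_fin_two, Matrix.trace_fin_two, Matrix.det_fin_two]
  rw [Matrix.charmatrix_apply_eq, Matrix.charmatrix_apply_eq,
    Matrix.charmatrix_apply_ne _ _ _ (by decide), Matrix.charmatrix_apply_ne _ _ _ (by decide)]
  simp
  ring

open Real in
set_option maxHeartbeats 1000000 in
/-- Let `V(φ, θ) = (sin 2φ · sin(θ − φ), 2((n−1)cos θ cos φ − (m−1)sin θ sin φ))`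
and `φ₁ = arctan √((n−1)/(m−1))`. The Jacobian matrix `J` of `V` at the zero
`p₁ = (φ₁, φ₁)` has trace `−(m+n−1) sin 2φ₁` and determinant `2(m+n−2) sin² 2φ₁`, so
the discriminant of its characteristic polynomial is
`sin² 2φ₁ · ((m+n)² − 10(m+n) + 17)`; consequently the eigenvalues of `J` are
non-real if and only if `m + n < 8`. -/
theorem jacobian_at_cone_point_focal_iff (m n : ℕ) (hm : 2 ≤ m) (hn : 2 ≤ n)
    (φ₁ : ℝ) (hφ₁ : φ₁ = arctan (Real.sqrt (((n : ℝ) - 1) / ((m : ℝ) - 1))))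
    (J : Matrix (Fin 2) (Fin 2) ℝ)
    (hJ : J =
      !![deriv (fun φ => sin (2 * φ) * sin (φ₁ - φ)) φ₁,
         deriv (fun θ => sin (2 * φ₁) * sin (θ - φ₁)) φ₁;
         deriv (fun φ =>
           2 * (((n : ℝ) - 1) * cos φ₁ * cos φ - ((m : ℝ) - 1) * sin φ₁ * sin φ)) φ₁,
         deriv (fun θ =>
           2 * (((n : ℝ) - 1) * cos θ * cos φ₁ - ((m : ℝ) - 1) * sin θ * sin φ₁)) φ₁]) :
    Matrix.trace J = -((m : ℝ) + (n : ℝ) - 1) * sin (2 * φ₁) ∧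
    J.det = 2 * ((m : ℝ) + (n : ℝ) - 2) * (sin (2 * φ₁)) ^ 2 ∧
    (Matrix.trace J) ^ 2 - 4 * J.det =
      (sin (2 * φ₁)) ^ 2 * (((m : ℝ) + (n : ℝ)) ^ 2 - 10 * ((m : ℝ) + (n : ℝ)) + 17) ∧
    ((¬ ∃ x : ℝ, (Matrix.charpoly J).IsRoot x) ↔ m + n < 8) := by
  have hmR : (2:ℝ) ≤ (m:ℝ) := by exact_mod_cast hm
  have hnR : (2:ℝ) ≤ (n:ℝ) := by exact_mod_cast hn
  -- sin (2 φ₁) > 0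
  have ht : (0:ℝ) < Real.sqrt (((n : ℝ) - 1) / ((m : ℝ) - 1)) :=
    Real.sqrt_pos.mpr (div_pos (by linarith) (by linarith))
  have hφpos : 0 < φ₁ := by
    rw [hφ₁, ← Real.arctan_zero]; exact Real.arctan_strictMono ht
  have hφlt : φ₁ < π / 2 := by rw [hφ₁]; exact Real.arctan_lt_pi_div_two _
  have hS : 0 < sin (2 * φ₁) :=
    Real.sin_pos_of_pos_of_lt_pi (by linarith) (by linarith)
  set S : ℝ := sin (2 * φ₁) with hSdef
  -- the four derivatives
  have d1 : deriv (fun φ => sin (2 * φ) * sin (φ₁ - φ)) φ₁ = -S := by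
    have h : HasDerivAt (fun φ => sin (2 * φ) * sin (φ₁ - φ))
        ((cos (2 * φ₁) * (2 * 1)) * sin (φ₁ - φ₁) + sin (2 * φ₁) * (cos (φ₁ - φ₁) * (0 - 1)))
        φ₁ :=
      (((hasDerivAt_id φ₁).const_mul 2).sin).mul
        (((hasDerivAt_const φ₁ φ₁).sub (hasDerivAt_id φ₁)).sin)
    rw [h.deriv]; simp [hSdef]
  have d2 : deriv (fun θ => sin (2 * φ₁) * sin (θ - φ₁)) φ₁ = S := by
    have h : HasDerivAt (fun θ => sin (2 * φ₁) * sin (θ - φ₁))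
        (sin (2 * φ₁) * (cos (φ₁ - φ₁) * (1 - 0))) φ₁ :=
      (((hasDerivAt_id φ₁).sub (hasDerivAt_const φ₁ φ₁)).sin).const_mul _
    rw [h.deriv]; simp [hSdef]
  have hsc : 2 * (sin φ₁ * cos φ₁) = S := by
    rw [hSdef, Real.sin_two_mul]; ring
  have d3 : deriv (fun φ =>
      2 * (((n : ℝ) - 1) * cos φ₁ * cos φ - ((m : ℝ) - 1) * sin φ₁ * sin φ)) φ₁
      = -(((m:ℝ) + n - 2) * S) := by
    have h : HasDerivAt (fun φ =>
        2 * (((n : ℝ) - 1) * cos φ₁ * cos φ - ((m : ℝ) - 1) * sin φ₁ * sin φ))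
        (2 * ((((n : ℝ) - 1) * cos φ₁) * (-sin φ₁) - (((m : ℝ) - 1) * sin φ₁) * cos φ₁)) φ₁ :=
      ((((Real.hasDerivAt_cos φ₁).const_mul (((n : ℝ) - 1) * cos φ₁)).sub
        ((Real.hasDerivAt_sin φ₁).const_mul (((m : ℝ) - 1) * sin φ₁))).const_mul 2)
    rw [h.deriv, ← hsc]; ring
  have d4 : deriv (fun θ =>
      2 * (((n : ℝ) - 1) * cos θ * cos φ₁ - ((m : ℝ) - 1) * sin θ * sin φ₁)) φ₁
      = -(((m:ℝ) + n - 2) * S) := by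
    have h : HasDerivAt (fun θ =>
        2 * (((n : ℝ) - 1) * cos θ * cos φ₁ - ((m : ℝ) - 1) * sin θ * sin φ₁))
        (2 * (((n : ℝ) - 1) * (-sin φ₁) * cos φ₁ - ((m : ℝ) - 1) * cos φ₁ * sin φ₁)) φ₁ := by
      have h1 : HasDerivAt (fun θ : ℝ => ((n : ℝ) - 1) * cos θ * cos φ₁)
          (((n : ℝ) - 1) * (-sin φ₁) * cos φ₁) φ₁ := by
        simpa [mul_comm, mul_assoc, mul_left_comm] using
          ((Real.hasDerivAt_cos φ₁).const_mul ((n : ℝ) - 1)).mul_const (cos φ₁)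
      have h2 : HasDerivAt (fun θ : ℝ => ((m : ℝ) - 1) * sin θ * sin φ₁)
          (((m : ℝ) - 1) * cos φ₁ * sin φ₁) φ₁ := by
        simpa [mul_comm, mul_assoc, mul_left_comm] using
          ((Real.hasDerivAt_sin φ₁).const_mul ((m : ℝ) - 1)).mul_const (sin φ₁)
      exact (h1.sub h2).const_mul 2
    rw [h.deriv, ← hsc]; ring
  rw [hJ, d1, d2, d3, d4] at *
  set k : ℝ := (m:ℝ) + (n:ℝ) with hk
  have htr : Matrix.trace !![-S, S; -((k - 2) * S), -((k - 2) * S)] = -(k - 1) * S := by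
    simp [Matrix.trace_fin_two]; ring
  have hdet : Matrix.det !![-S, S; -((k - 2) * S), -((k - 2) * S)] = 2 * (k - 2) * S ^ 2 := by
    simp [Matrix.det_fin_two_of]; ring
  refine ⟨htr, hdet, ?_, ?_⟩
  · rw [htr, hdet]; ring
  · -- char poly roots
    have hcp : ∀ x : ℝ, (Matrix.charpoly !![-S, S; -((k - 2) * S), -((k - 2) * S)]).IsRoot x ↔
        x ^ 2 - (-(k - 1) * S) * x + 2 * (k - 2) * S ^ 2 = 0 := by
      intro x
      have := charpoly_eval_fin_two !![-S, S; -((k - 2) * S), -((k - 2) * S)] x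
      rw [htr, hdet] at this
      rw [Polynomial.IsRoot, this]
    have hk4 : (4:ℝ) ≤ k := by rw [hk]; linarith
    constructor
    · intro hnr
      by_contra hge
      push_neg at hge
      have hk8 : (8:ℝ) ≤ k := by
        rw [hk]; exact_mod_cast hge
      apply hnr
      have hD : 0 ≤ (-(k - 1) * S) ^ 2 - 4 * (2 * (k - 2) * S ^ 2) := by nlinarith
      have hsq : Real.sqrt ((-(k - 1) * S) ^ 2 - 4 * (2 * (k - 2) * S ^ 2)) ^ 2
          = (-(k - 1) * S) ^ 2 - 4 * (2 * (k - 2) * S ^ 2) := Real.sq_sqrt hD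
      refine ⟨(-(k - 1) * S + Real.sqrt ((-(k - 1) * S) ^ 2 - 4 * (2 * (k - 2) * S ^ 2))) / 2, ?_⟩
      rw [hcp]
      linear_combination hsq / 4
    · intro hlt hex
      obtain ⟨x, hx⟩ := hex
      rw [hcp] at hx
      have hk7 : k ≤ 7 := by
        rw [hk]
        have : m + n ≤ 7 := by omega
        exact_mod_cast this
      have hdisc : (-(k - 1) * S) ^ 2 - 4 * (2 * (k - 2) * S ^ 2) < 0 := by
        have h1 : k ^ 2 - 10 * k + 17 < 0 := by nlinarith
        have h2 : (-(k - 1) * S) ^ 2 - 4 * (2 * (k - 2) * S ^ 2)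
            = S ^ 2 * (k ^ 2 - 10 * k + 17) := by ring
        rw [h2]
        exact mul_neg_of_pos_of_neg (by positivity) h1
      have hid : (2 * x + (k - 1) * S) ^ 2
          = 4 * (x ^ 2 - (-(k - 1) * S) * x + 2 * (k - 2) * S ^ 2)
            + ((-(k - 1) * S) ^ 2 - 4 * (2 * (k - 2) * S ^ 2)) := by ring
      linarith [sq_nonneg (2 * x + (k - 1) * S), hid, hx, hdisc]
end

section
/- Let m, n ≥ 2 be integers, r > 0, φ ∈ (0, π/2), and θ ∈ ℝ, and set A = sin(θ − φ)/r and B = 2·((n−1)·cos θ·cos φ − (m−1)·sin θ·sin φ)/(r·sin(2φ)) (the right-hand sides of the ODE system φ' = A, θ' = B for profile curves). If θ = φ + π/2 then B − A = −(m+n−1)/r < 0, and if θ = φ − π/2 then B − A = (m+n−1)/r > 0. (Hence along any solution of the system with φ ∈ (0, π/2), the quantity θ − φ cannot cross out of the strip |θ − φ| < π/2, so the radius r(t) = |γ(t)| of the corresponding profile curve is monotonically increasing.) -/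
open Real in
/-- For the right-hand sides `A = sin(θ − φ)/r` and
`B = 2((n−1)cos θ cos φ − (m−1)sin θ sin φ)/(r sin 2φ)` of the profile-curve ODE
system `φ' = A`, `θ' = B` (with `r > 0`, `φ ∈ (0, π/2)`): if `θ = φ + π/2` then
`B − A = −(m+n−1)/r < 0`, and if `θ = φ − π/2` then `B − A = (m+n−1)/r > 0`.
Hence `θ − φ` cannot cross out of the strip `|θ − φ| < π/2`, so the radius of the
corresponding profile curve is monotonically increasing. -/
theorem profile_angle_difference_barrier (m n : ℕ) (hm : 2 ≤ m) (hn : 2 ≤ n)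
    (r φ θ : ℝ) (hr : 0 < r) (hφ : φ ∈ Set.Ioo 0 (π / 2))
    (A B : ℝ)
    (hA : A = sin (θ - φ) / r)
    (hB : B = 2 * (((n : ℝ) - 1) * cos θ * cos φ - ((m : ℝ) - 1) * sin θ * sin φ) /
      (r * sin (2 * φ))) :
    (θ = φ + π / 2 → B - A = -((m : ℝ) + (n : ℝ) - 1) / r ∧ B - A < 0) ∧
    (θ = φ - π / 2 → B - A = ((m : ℝ) + (n : ℝ) - 1) / r ∧ 0 < B - A) := by
  obtain ⟨hφ0, hφ2⟩ := hφ
  have hs : 0 < sin φ := Real.sin_pos_of_pos_of_lt_pi hφ0 (by linarith [Real.pi_pos])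
  have hc : 0 < cos φ := Real.cos_pos_of_mem_Ioo ⟨by linarith [Real.pi_pos], hφ2⟩
  have hsin2 : sin (2 * φ) = 2 * sin φ * cos φ := by
    rw [Real.sin_two_mul]
  have hm1 : (1:ℝ) ≤ (m:ℝ) := by exact_mod_cast Nat.one_le_of_lt hm
  have hn1 : (1:ℝ) ≤ (n:ℝ) := by exact_mod_cast Nat.one_le_of_lt hn
  have hmn : (0:ℝ) < (m:ℝ) + (n:ℝ) - 1 := by linarith
  constructor
  · intro hθ
    have hcθ : cos θ = -sin φ := by rw [hθ, Real.cos_add_pi_div_two]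
    have hsθ : sin θ = cos φ := by rw [hθ, Real.sin_add_pi_div_two]
    have hA' : A = 1 / r := by
      rw [hA, hθ]; norm_num
    have hB' : B = -((m:ℝ) + (n:ℝ) - 2) / r := by
      rw [hB, hcθ, hsθ, hsin2]
      field_simp
      ring
    have heq : B - A = -((m : ℝ) + (n : ℝ) - 1) / r := by
      rw [hA', hB']; field_simp; ring
    exact ⟨heq, by rw [heq]; exact div_neg_of_neg_of_pos (by linarith) hr⟩
  · intro hθ
    have hcθ : cos θ = sin φ := by
      rw [hθ, show φ - π/2 = -(π/2 - φ) by ring, Real.cos_neg, Real.cos_pi_div_two_sub]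
    have hsθ : sin θ = -cos φ := by
      rw [hθ, show φ - π/2 = -(π/2 - φ) by ring, Real.sin_neg, Real.sin_pi_div_two_sub]
    have hA' : A = -1 / r := by
      rw [hA, hθ]
      norm_num
    have hB' : B = ((m:ℝ) + (n:ℝ) - 2) / r := by
      rw [hB, hcθ, hsθ, hsin2]
      field_simp
      ring
    have heq : B - A = ((m : ℝ) + (n : ℝ) - 1) / r := by
      rw [hA', hB']; field_simp; ring
    exact ⟨heq, by rw [heq]; exact div_pos hmn hr⟩
end
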